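/- arXiv:1811.02009 — 8 statements merged into one kernel-verified Lean document; each statement's English description precedes it below -/
import Mathlib

section
/- For any graph G and integers β > β⁻ ≥ 0, there exists a subgraph H of G such that (P1) every edge (u,v) of H satisfies deg_H(u) + deg_H(v) ≤ β, and (P2) every edge (u,v) of G not in H satisfies deg_H(u) + deg_H(v) ≥ β⁻. -/
open SimpleGraph

/-- The degree of a vertex in a simple graph. -/
noncomputable def deg {V : Type*} (G : SimpleGraph V) (v : V) : ℕ := (G.neighborSet v).ncard

section Aux

variable {V : Type*}

/-- Delete the edge `{u,v}` from `H`. -/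
def delE (H : SimpleGraph V) (u v : V) : SimpleGraph V where
  Adj a b := H.Adj a b ∧ ¬((a = u ∧ b = v) ∨ (a = v ∧ b = u))
  symm := ⟨fun a b => by intro ⟨h1, h2⟩; exact ⟨h1.symm, by tauto⟩⟩
  loopless := ⟨fun a => by intro ⟨h1, _⟩; exact H.loopless.irrefl a h1⟩

/-- Add the edge `{u,v}` (with `u ≠ v`) to `H`. -/
def addE (H : SimpleGraph V) (u v : V) (hne : u ≠ v) : SimpleGraph V where
  Adj a b := H.Adj a b ∨ (a = u ∧ b = v) ∨ (a = v ∧ b = u)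
  symm := ⟨fun a b => by
    rintro (h | ⟨rfl, rfl⟩ | ⟨rfl, rfl⟩)
    · exact Or.inl h.symm
    · exact Or.inr (Or.inr ⟨rfl, rfl⟩)
    · exact Or.inr (Or.inl ⟨rfl, rfl⟩)⟩
  loopless := ⟨fun a => by
    rintro (h | ⟨rfl, rfl⟩ | ⟨rfl, rfl⟩)
    · exact H.loopless.irrefl a h
    · exact hne rfl
    · exact hne rfl⟩

lemma delE_adj (H : SimpleGraph V) (u v a b : V) :
    (delE H u v).Adj a b ↔ H.Adj a b ∧ ¬((a = u ∧ b = v) ∨ (a = v ∧ b = u)) := Iff.rfl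

lemma addE_adj (H : SimpleGraph V) (u v a b : V) (hne : u ≠ v) :
    (addE H u v hne).Adj a b ↔ H.Adj a b ∨ (a = u ∧ b = v) ∨ (a = v ∧ b = u) := Iff.rfl

lemma delE_ns_ne (H : SimpleGraph V) {u v w : V} (hwu : w ≠ u) (hwv : w ≠ v) :
    (delE H u v).neighborSet w = H.neighborSet w := by
  ext x
  simp only [mem_neighborSet, delE_adj]
  tauto

lemma delE_ns_u (H : SimpleGraph V) {u v : V} :
    (delE H u v).neighborSet u = H.neighborSet u \ {v} := by
  ext x
  simp only [mem_neighborSet, delE_adj, Set.mem_diff, Set.mem_singleton_iff]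
  constructor
  · rintro ⟨h1, h2⟩
    exact ⟨h1, fun hx => h2 (Or.inl ⟨by trivial, hx⟩)⟩
  · rintro ⟨h1, h2⟩
    refine ⟨h1, ?_⟩
    rintro (⟨-, rfl⟩ | ⟨rfl, rfl⟩)
    · exact h2 rfl
    · exact H.loopless.irrefl _ h1

lemma delE_ns_v (H : SimpleGraph V) {u v : V} :
    (delE H u v).neighborSet v = H.neighborSet v \ {u} := by
  ext x
  simp only [mem_neighborSet, delE_adj, Set.mem_diff, Set.mem_singleton_iff]
  constructor
  · rintro ⟨h1, h2⟩
    exact ⟨h1, fun hx => h2 (Or.inr ⟨by trivial, hx⟩)⟩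
  · rintro ⟨h1, h2⟩
    refine ⟨h1, ?_⟩
    rintro (⟨rfl, rfl⟩ | ⟨-, rfl⟩)
    · exact H.loopless.irrefl _ h1
    · exact h2 rfl

lemma addE_ns_ne (H : SimpleGraph V) {u v w : V} (hne : u ≠ v) (hwu : w ≠ u) (hwv : w ≠ v) :
    (addE H u v hne).neighborSet w = H.neighborSet w := by
  ext x
  simp only [mem_neighborSet, addE_adj]
  constructor
  · rintro (h | ⟨rfl, rfl⟩ | ⟨rfl, rfl⟩)
    · exact h
    · exact absurd rfl hwu
    · exact absurd rfl hwv
  · exact fun h => Or.inl h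

lemma addE_ns_u (H : SimpleGraph V) {u v : V} (hne : u ≠ v) :
    (addE H u v hne).neighborSet u = insert v (H.neighborSet u) := by
  ext x
  simp only [mem_neighborSet, addE_adj, Set.mem_insert_iff]
  constructor
  · rintro (h | ⟨-, rfl⟩ | ⟨h1, rfl⟩)
    · exact Or.inr h
    · exact Or.inl rfl
    · exact absurd h1 hne
  · rintro (rfl | h)
    · exact Or.inr (Or.inl ⟨by trivial, by trivial⟩)
    · exact Or.inl h

lemma addE_ns_v (H : SimpleGraph V) {u v : V} (hne : u ≠ v) :
    (addE H u v hne).neighborSet v = insert u (H.neighborSet v) := by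
  ext x
  simp only [mem_neighborSet, addE_adj, Set.mem_insert_iff]
  constructor
  · rintro (h | ⟨h1, rfl⟩ | ⟨-, rfl⟩)
    · exact Or.inr h
    · first | exact absurd h1 hne | exact absurd h1.symm hne
    · exact Or.inl rfl
  · rintro (rfl | h)
    · exact Or.inr (Or.inr ⟨by trivial, by trivial⟩)
    · exact Or.inl h

/-- Sum of pointwise differences that vanish off `{u, v}`. -/
lemma sum_diff_two [Fintype V] [DecidableEq V] {f g : V → ℤ} {u v : V} (hne : u ≠ v)
    (h : ∀ w, w ≠ u → w ≠ v → f w = g w) :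
    ∑ w : V, f w - ∑ w : V, g w = (f u - g u) + (f v - g v) := by
  rw [← Finset.sum_sub_distrib]
  have : ∑ w ∈ ({u, v} : Finset V), (f w - g w) = ∑ w : V, (f w - g w) := by
    apply Finset.sum_subset (Finset.subset_univ _)
    intro x _ hx
    simp only [Finset.mem_insert, Finset.mem_singleton] at hx
    push_neg at hx
    rw [h x hx.1 hx.2, sub_self]
  rw [← this, Finset.sum_pair hne]

end Aux

/-- Existence of an EDCS: for any graph `G` and integers `β > β⁻ ≥ 0`, there is a subgraph
`H ≤ G` such that (P1) every edge of `H` has endpoint-degree sum (in `H`) at most `β`, and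
(P2) every edge of `G` not in `H` has endpoint-degree sum (in `H`) at least `β⁻`. -/
theorem stmt3 {V : Type*} [Fintype V] (G : SimpleGraph V) (β βm : ℕ) (hβ : βm < β) :
    ∃ H : SimpleGraph V, H ≤ G ∧
      (∀ u v, H.Adj u v → deg H u + deg H v ≤ β) ∧
      (∀ u v, G.Adj u v → ¬ H.Adj u v → βm ≤ deg H u + deg H v) := by
  classical
  set F : ℤ → ℤ := fun x => (2 * (β : ℤ) - 1) * x - 2 * x ^ 2 with hF
  have hFx : ∀ x : ℤ, F x = (2 * (β : ℤ) - 1) * x - 2 * x ^ 2 := fun _ => rfl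
  set Φ : SimpleGraph V → ℤ := fun H => ∑ w : V, F (deg H w) with hΦ
  have hΦx : ∀ H : SimpleGraph V, Φ H = ∑ w : V, F (deg H w) := fun _ => rfl
  have : Nonempty {H : SimpleGraph V // H ≤ G} := ⟨⟨⊥, bot_le⟩⟩
  obtain ⟨⟨H, hHG⟩, hmax⟩ := Finite.exists_max (fun H : {H : SimpleGraph V // H ≤ G} => Φ H.1)
  refine ⟨H, hHG, ?_, ?_⟩
  · -- P1
    intro u v huv
    by_contra hcon
    push_neg at hcon
    have hne : u ≠ v := huv.ne
    set H' := delE H u v with hH'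
    have hle : H' ≤ G := fun a b hab => hHG hab.1
    have hu : (deg H' u : ℤ) = (deg H u : ℤ) - 1 := by
      have hm : v ∈ H.neighborSet u := huv
      have h0 := Set.ncard_diff_singleton_of_mem hm
      have h1 : 0 < (H.neighborSet u).ncard :=
        (Set.ncard_pos (Set.toFinite _)).2 ⟨v, hm⟩
      simp only [deg, hH', delE_ns_u, h0]
      omega
    have hv : (deg H' v : ℤ) = (deg H v : ℤ) - 1 := by
      have hm : u ∈ H.neighborSet v := huv.symm
      have h0 := Set.ncard_diff_singleton_of_mem hm
      have h1 : 0 < (H.neighborSet v).ncard :=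
        (Set.ncard_pos (Set.toFinite _)).2 ⟨u, hm⟩
      simp only [deg, hH', delE_ns_v, h0]
      omega
    have hw : ∀ w, w ≠ u → w ≠ v → F (deg H' w) = F (deg H w) := by
      intro w hwu hwv
      rw [deg, hH', delE_ns_ne H hwu hwv, ← deg]
    have hdiff : Φ H' - Φ H =
        (F (deg H' u) - F (deg H u)) + (F (deg H' v) - F (deg H v)) := by
      rw [hΦx, hΦx]; exact sum_diff_two hne hw
    have hab : (β : ℤ) + 1 ≤ (deg H u : ℤ) + (deg H v : ℤ) := by
      have := hcon; omega
    have hpos : 0 < Φ H' - Φ H := by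
      rw [hdiff, hu, hv]
      simp only [hFx]
      nlinarith [hab]
    have hle2 : Φ H' ≤ Φ H := hmax ⟨H', hle⟩
    linarith
  · -- P2
    intro u v huvG huvH
    by_contra hcon
    push_neg at hcon
    have hne : u ≠ v := huvG.ne
    set H' := addE H u v hne with hH'
    have hle : H' ≤ G := by
      intro a b hab
      rcases hab with h | ⟨rfl, rfl⟩ | ⟨rfl, rfl⟩
      · exact hHG h
      · exact huvG
      · exact huvG.symm
    have hu : (deg H' u : ℤ) = (deg H u : ℤ) + 1 := by
      have hm : v ∉ H.neighborSet u := huvH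
      have h0 := Set.ncard_insert_of_notMem hm (Set.toFinite _)
      simp only [deg, hH', addE_ns_u, h0]
      omega
    have hv : (deg H' v : ℤ) = (deg H v : ℤ) + 1 := by
      have hm : u ∉ H.neighborSet v := fun h => huvH h.symm
      have h0 := Set.ncard_insert_of_notMem hm (Set.toFinite _)
      simp only [deg, hH', addE_ns_v, h0]
      omega
    have hw : ∀ w, w ≠ u → w ≠ v → F (deg H' w) = F (deg H w) := by
      intro w hwu hwv
      rw [deg, hH', addE_ns_ne H hne hwu hwv, ← deg]
    have hdiff : Φ H' - Φ H =
        (F (deg H' u) - F (deg H u)) + (F (deg H' v) - F (deg H v)) := by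
      rw [hΦx, hΦx]; exact sum_diff_two hne hw
    have hab : (deg H u : ℤ) + (deg H v : ℤ) ≤ (β : ℤ) - 2 := by
      have h1 : deg H u + deg H v < βm := hcon
      omega
    have hpos : 0 < Φ H' - Φ H := by
      rw [hdiff, hu, hv]
      simp only [hFx]
      nlinarith [hab]
    have hle2 : Φ H' ≤ Φ H := hmax ⟨H', hle⟩
    linarith
end

section
/- Let H be a subgraph of a graph G obtained by a local-search process fixing violated EDCS constraints. If an edge (u,v) with deg_H(u)+deg_H(v) ≥ β+1 is removed from H, then the potential Φ(H) = (β - 1/2)·Σ_v deg_H(v) - Σ_{(u,v)∈E(H)}(deg_H(u)+deg_H(v)) increases by at least 1. -/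
open SimpleGraph

/-- The sum of the degrees (in `H`) of the two endpoints of an edge. -/
noncomputable def degSum {V : Type*} (H : SimpleGraph V) : Sym2 V → ℝ :=
  Sym2.lift ⟨fun u v => (deg H u : ℝ) + deg H v, fun u v => by ring⟩

/-- The potential function `Φ(H) = (β - 1/2)·Σ_v deg_H(v) - Σ_{(u,v)∈E(H)} (deg_H(u)+deg_H(v))`. -/
noncomputable def potential {V : Type*} [Fintype V] (β : ℕ) (H : SimpleGraph V) : ℝ :=
  (β - 1/2) * ∑ v, (deg H v : ℝ) - ∑ᶠ e ∈ H.edgeSet, degSum H e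

section aux

open Finset

variable {V : Type*} [Fintype V] [DecidableEq V] (H : SimpleGraph V) [DecidableRel H.Adj]

omit [DecidableEq V] in
lemma deg_eq_degree (v : V) : deg H v = H.degree v := by
  rw [deg, Set.ncard_eq_toFinset_card']; rfl

lemma edge_sum_eq : ∑ᶠ e ∈ H.edgeSet, degSum H e = ∑ v, (deg H v : ℝ) ^ 2 := by
  rw [← coe_edgeFinset, finsum_mem_coe_finset]
  have h1 : ∀ e ∈ H.edgeFinset, degSum H e
      = ∑ x, (if x ∈ e then (deg H x : ℝ) else 0) := by
    intro e he
    induction e with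
    | _ a b =>
      have hab : a ≠ b := by
        rw [mem_edgeFinset, mem_edgeSet] at he
        exact he.ne
      rw [← Finset.sum_filter]
      have h2 : Finset.univ.filter (· ∈ s(a, b)) = {a, b} := by
        ext x; simp [Sym2.mem_iff]
      rw [h2, Finset.sum_pair hab]
      rfl
  rw [Finset.sum_congr rfl h1, Finset.sum_comm]
  refine Finset.sum_congr rfl fun x _ => ?_
  rw [← Finset.sum_filter]
  have h3 : H.edgeFinset.filter (x ∈ ·) = H.incidenceFinset x :=
    (incidenceFinset_eq_filter _ _).symm
  rw [h3, Finset.sum_const, card_incidenceFinset_eq_degree, ← deg_eq_degree, nsmul_eq_mul, sq]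

omit [DecidableEq V] [DecidableRel H.Adj] in
lemma deg_delete_self {u v : V} (huv : H.Adj u v) :
    deg (H.deleteEdges {s(u, v)}) u + 1 = deg H u := by
  have hns : (H.deleteEdges {s(u, v)}).neighborSet u = H.neighborSet u \ {v} := by
    ext w
    simp only [mem_neighborSet, deleteEdges_adj, Set.mem_diff, Set.mem_singleton_iff,
      Set.mem_setOf_eq]
    constructor
    · rintro ⟨h, hne⟩
      exact ⟨h, fun hw => hne (by rw [hw])⟩
    · rintro ⟨h, hw⟩
      refine ⟨h, fun hc => hw ?_⟩
      have := Sym2.eq_iff.mp hc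
      rcases this with ⟨-, h2⟩ | ⟨h1, h2⟩
      · exact h2
      · exact absurd h1 huv.ne
  rw [deg, deg, hns]
  exact Set.ncard_diff_singleton_add_one huv ((H.neighborSet u).toFinite)

omit [DecidableEq V] [DecidableRel H.Adj] in
lemma deg_delete_other {u v w : V} (hu : w ≠ u) (hv : w ≠ v) :
    deg (H.deleteEdges {s(u, v)}) w = deg H w := by
  have hns : (H.deleteEdges {s(u, v)}).neighborSet w = H.neighborSet w := by
    ext x
    simp only [mem_neighborSet, deleteEdges_adj, Set.mem_setOf_eq, Set.mem_singleton_iff]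
    constructor
    · exact fun h => h.1
    · intro h
      refine ⟨h, fun hc => ?_⟩
      rw [Sym2.eq_iff] at hc
      rcases hc with ⟨h1, -⟩ | ⟨h1, -⟩
      · exact hu h1
      · exact hv h1
  rw [deg, deg, hns]

end aux

/-- Removing an edge `(u,v)` of `H` with `deg_H(u) + deg_H(v) ≥ β + 1` increases the
potential `Φ` by at least `1`. -/
theorem stmt4 {V : Type*} [Fintype V] (G H : SimpleGraph V) (hHG : H ≤ G) (β : ℕ)
    (hβ : 1 ≤ β) (u v : V) (huv : H.Adj u v) (hdeg : β + 1 ≤ deg H u + deg H v) :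
    potential β H + 1 ≤ potential β (H.deleteEdges {s(u, v)}) := by
  classical
  set H2 := H.deleteEdges {s(u, v)} with hH2
  have hne : u ≠ v := huv.ne
  have hdu : (deg H2 u : ℝ) = (deg H u : ℝ) - 1 := by
    have := deg_delete_self H huv
    push_cast [← this]; ring
  have hdv : (deg H2 v : ℝ) = (deg H v : ℝ) - 1 := by
    have := deg_delete_self H huv.symm
    have h2 : H.deleteEdges {s(v, u)} = H2 := by rw [hH2, Sym2.eq_swap]
    rw [h2] at this
    push_cast [← this]; ring
  have hdo : ∀ w, w ≠ u → w ≠ v → (deg H2 w : ℝ) = deg H w := by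
    intro w h1 h2
    rw [hH2, deg_delete_other H h1 h2]
  -- sum of degrees
  have hsum : ∑ x, (deg H x : ℝ) = (∑ x, (deg H2 x : ℝ)) + 2 := by
    have : ∀ x, (deg H x : ℝ) = (deg H2 x : ℝ)
        + ((if x = u then 1 else 0) + (if x = v then 1 else 0)) := by
      intro x
      by_cases h1 : x = u
      · subst h1; simp [hdu, if_neg hne]
      · by_cases h2 : x = v
        · subst h2; simp [hdv, if_neg (Ne.symm hne)]
        · simp [hdo x h1 h2, h1, h2]
    rw [Finset.sum_congr rfl fun x _ => this x, Finset.sum_add_distrib,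
      Finset.sum_add_distrib, Finset.sum_ite_eq' Finset.univ u fun _ => (1 : ℝ),
      Finset.sum_ite_eq' Finset.univ v fun _ => (1 : ℝ)]
    simp; ring
  -- sum of squares
  have hsq : ∑ x, (deg H x : ℝ) ^ 2
      = (∑ x, (deg H2 x : ℝ) ^ 2) + 2 * (deg H u : ℝ) + 2 * (deg H v : ℝ) - 2 := by
    have : ∀ x, (deg H x : ℝ) ^ 2 = (deg H2 x : ℝ) ^ 2
        + ((if x = u then 2 * (deg H u : ℝ) - 1 else 0)
          + (if x = v then 2 * (deg H v : ℝ) - 1 else 0)) := by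
      intro x
      by_cases h1 : x = u
      · subst h1; rw [hdu]; simp [if_neg hne]; ring
      · by_cases h2 : x = v
        · subst h2; rw [hdv]; simp [if_neg (Ne.symm hne)]; ring
        · simp [hdo x h1 h2, h1, h2]
    rw [Finset.sum_congr rfl fun x _ => this x, Finset.sum_add_distrib,
      Finset.sum_add_distrib, Finset.sum_ite_eq' Finset.univ u,
      Finset.sum_ite_eq' Finset.univ v]
    simp; ring
  have hdegR : (β : ℝ) + 1 ≤ (deg H u : ℝ) + (deg H v : ℝ) := by
    exact_mod_cast hdeg
  rw [potential, potential, edge_sum_eq, edge_sum_eq, hsum, hsq]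
  nlinarith [hdegR]
end

section
/- Let H be a subgraph of G and suppose the edge (u,v) ∈ E(G)\E(H) satisfies deg_H(u)+deg_H(v) ≤ β⁻ - 1 where β⁻ ≤ β - 1. Then adding (u,v) to H increases the potential Φ(H) = (β - 1/2)·Σ_v deg_H(v) - Σ_{(u,v)∈E(H)}(deg_H(u)+deg_H(v)) by at least 1. -/
open SimpleGraph

/-- Adding an edge `(u,v) ∈ E(G)\E(H)` with `deg_H(u) + deg_H(v) ≤ β⁻ - 1`, where
`1 ≤ β⁻ ≤ β - 1`, increases the potential `Φ` by at least `1`. -/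
theorem stmt5 {V : Type*} [Fintype V] (G H : SimpleGraph V) (hHG : H ≤ G) (β βm : ℕ)
    (hβ : 1 ≤ β) (hβm : 1 ≤ βm) (hββ : βm ≤ β - 1)
    (u v : V) (huv : G.Adj u v) (hnH : ¬ H.Adj u v)
    (hdeg : deg H u + deg H v ≤ βm - 1) :
    potential β H + 1 ≤ potential β (H ⊔ fromEdgeSet {s(u, v)}) := by
  classical
  set H2 := H ⊔ fromEdgeSet {s(u, v)} with hH2
  have hne : u ≠ v := huv.ne
  -- neighbor sets
  have hNu : H2.neighborSet u = insert v (H.neighborSet u) := by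
    ext w
    simp only [mem_neighborSet, hH2, sup_adj, fromEdgeSet_adj, Set.mem_singleton_iff,
      Set.mem_insert_iff, Sym2.eq_iff]
    constructor
    · tauto
    · rintro (rfl | h) <;> tauto
  have hNv : H2.neighborSet v = insert u (H.neighborSet v) := by
    ext w
    simp only [mem_neighborSet, hH2, sup_adj, fromEdgeSet_adj, Set.mem_singleton_iff,
      Set.mem_insert_iff, Sym2.eq_iff]
    constructor
    · tauto
    · rintro (rfl | h) <;> tauto
  have hNw : ∀ w, w ≠ u → w ≠ v → H2.neighborSet w = H.neighborSet w := by
    intro w hwu hwv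
    ext x
    simp only [mem_neighborSet, hH2, sup_adj, fromEdgeSet_adj, Set.mem_singleton_iff, Sym2.eq_iff]
    constructor
    · rintro (h | ⟨(⟨rfl, rfl⟩ | ⟨rfl, rfl⟩), _⟩) <;> tauto
    · tauto
  -- degree facts
  have hmemu : v ∉ H.neighborSet u := hnH
  have hmemv : u ∉ H.neighborSet v := fun h => hnH (H.adj_symm h)
  have hdu : deg H2 u = deg H u + 1 := by
    rw [deg, hNu, Set.ncard_insert_of_notMem hmemu]; rfl
  have hdv : deg H2 v = deg H v + 1 := by
    rw [deg, hNv, Set.ncard_insert_of_notMem hmemv]; rfl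
  have hdw : ∀ w, w ≠ u → w ≠ v → deg H2 w = deg H w := by
    intro w h1 h2; rw [deg, hNw w h1 h2]; rfl
  -- vertex degree sum
  have hsum : ∑ w, (deg H2 w : ℝ) = ∑ w, (deg H w : ℝ) + 2 := by
    have h0 : ∑ w, ((deg H2 w : ℝ) - deg H w) = 2 := by
      rw [← Finset.sum_subset (Finset.subset_univ ({u, v} : Finset V))]
      · rw [Finset.sum_pair hne, hdu, hdv]; push_cast; ring
      · intro w _ hw
        simp only [Finset.mem_insert, Finset.mem_singleton, not_or] at hw
        rw [hdw w hw.1 hw.2]; ring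
    rw [Finset.sum_sub_distrib] at h0
    linarith
  -- deg = degree, incidence counting
  have hdeg_eq : ∀ (K : SimpleGraph V) (x : V), deg K x = K.degree x := by
    intro K x
    have h1 : K.neighborSet x = ↑(K.neighborFinset x) := by
      rw [neighborFinset_def, Set.coe_toFinset]
    rw [deg, ← card_neighborFinset_eq_degree]; exact (congrArg Set.ncard h1).trans (Set.ncard_coe_finset _)
  have hinc : ∀ x : V, ∑ e ∈ H.edgeFinset, (if x ∈ e then (1:ℝ) else 0) = deg H x := by
    intro x
    rw [Finset.sum_boole, hdeg_eq, ← card_incidenceFinset_eq_degree, incidenceFinset_eq_filter]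
  -- pointwise degree change
  have hdd : ∀ x, (deg H2 x : ℝ) =
      deg H x + ((if x = u then 1 else 0) + (if x = v then 1 else 0)) := by
    intro x
    by_cases h1 : x = u
    · subst h1; rw [hdu]; simp [hne]
    by_cases h2 : x = v
    · subst h2; rw [hdv]; simp [h1]
    · rw [hdw x h1 h2]; simp [h1, h2]
  -- edge sets
  have hEnot : s(u, v) ∉ H.edgeSet := by rwa [mem_edgeSet]
  have hE2 : H2.edgeSet = insert s(u, v) H.edgeSet := by
    rw [hH2, edgeSet_sup, edgeSet_fromEdgeSet]
    ext e
    simp only [Set.mem_union, Set.mem_diff, Set.mem_singleton_iff, Set.mem_setOf_eq,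
      Set.mem_insert_iff]
    constructor
    · rintro (h | ⟨rfl, _⟩) <;> tauto
    · rintro (rfl | h)
      · exact Or.inr ⟨rfl, by simp [Sym2.mk_isDiag_iff, hne]⟩
      · tauto
  -- finsum to finset sums
  have hfsH : ∑ᶠ e ∈ H.edgeSet, degSum H e = ∑ e ∈ H.edgeFinset, degSum H e := by
    rw [show (H.edgeSet : Set (Sym2 V)) = ↑H.edgeFinset from (Set.coe_toFinset _).symm,
      finsum_mem_coe_finset]
  have hE2fin : H2.edgeFinset = insert s(u, v) H.edgeFinset := by
    apply Finset.coe_injective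
    rw [coe_edgeFinset, Finset.coe_insert, coe_edgeFinset, hE2]
  have hfsH2 : ∑ᶠ e ∈ H2.edgeSet, degSum H2 e
      = degSum H2 s(u, v) + ∑ e ∈ H.edgeFinset, degSum H2 e := by
    rw [show (H2.edgeSet : Set (Sym2 V)) = ↑H2.edgeFinset from (Set.coe_toFinset _).symm,
      finsum_mem_coe_finset, hE2fin, Finset.sum_insert (by simpa using hEnot)]
  -- edge sum change
  have hedge : ∑ e ∈ H.edgeFinset, degSum H2 e
      = ∑ e ∈ H.edgeFinset, degSum H e + (deg H u + deg H v) := by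
    have h1 : ∀ e ∈ H.edgeFinset, degSum H2 e
        = degSum H e + ((if u ∈ e then (1:ℝ) else 0) + (if v ∈ e then (1:ℝ) else 0)) := by
      intro e he
      induction e using Sym2.ind with
      | _ x y =>
        have hxy : x ≠ y := ((mem_edgeSet H).mp (mem_edgeFinset.mp he)).ne
        have hsplit : ∀ a : V, ((if x = a then (1:ℝ) else 0) + (if y = a then 1 else 0))
            = (if a = x ∨ a = y then 1 else 0) := by
          intro a
          by_cases h1 : x = a
          · subst h1
            simp [Ne.symm hxy]
          · by_cases h2 : y = a
            · subst h2
              simp [h1]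
            · simp [h1, h2, Ne.symm h1, Ne.symm h2]
        simp only [degSum, Sym2.lift_mk, Sym2.mem_iff]
        rw [hdd x, hdd y, ← hsplit u, ← hsplit v]
        ring
    rw [Finset.sum_congr rfl h1, Finset.sum_add_distrib, Finset.sum_add_distrib,
      hinc u, hinc v]
  -- the new edge
  have hnewe : degSum H2 s(u, v) = (deg H u : ℝ) + deg H v + 2 := by
    simp only [degSum, Sym2.lift_mk]
    rw [hdu, hdv]; push_cast; ring
  -- arithmetic
  have hb : deg H u + deg H v + 2 ≤ β := by omega
  have hb' : (deg H u : ℝ) + deg H v + 2 ≤ β := by exact_mod_cast hb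
  rw [potential, potential, hsum, hfsH2, hedge, hnewe, hfsH]
  ring_nf
  push_cast
  nlinarith [hb']
end

section
/- Let G(L,R,E) be a bipartite graph and H an EDCS(G, β, β⁻) with β⁻ ≥ (1-λ)β, λ ≤ ε/4, β ≥ 2/λ, ε < 1/2. Then μ(G) ≤ (3/2 + ε)·μ(H). -/
open SimpleGraph

/-- The maximum matching size of a simple graph. -/
noncomputable def matchNum {V : Type*} (G : SimpleGraph V) : ℕ :=
  sSup {n | ∃ M : G.Subgraph, M.IsMatching ∧ M.edgeSet.ncard = n}

set_option linter.unusedSectionVars false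

section AuxEDCS

variable {V : Type*} [Fintype V]

lemma matchNum_set_nonempty (P : SimpleGraph V) :
    {n | ∃ M : P.Subgraph, M.IsMatching ∧ M.edgeSet.ncard = n}.Nonempty := by
  refine ⟨0, ⊥, ?_, by simp⟩
  intro v hv
  simp [Subgraph.verts_bot] at hv

lemma matchNum_set_bddAbove (P : SimpleGraph V) :
    BddAbove {n | ∃ M : P.Subgraph, M.IsMatching ∧ M.edgeSet.ncard = n} := by
  refine ⟨Nat.card (Sym2 V), ?_⟩
  rintro n ⟨M, _, rfl⟩
  have h := Set.ncard_le_ncard (Set.subset_univ M.edgeSet) Set.finite_univ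
  simpa [Set.ncard_univ] using h

lemma le_matchNum (P : SimpleGraph V) (M : P.Subgraph) (hM : M.IsMatching) :
    M.edgeSet.ncard ≤ matchNum P :=
  le_csSup (matchNum_set_bddAbove P) ⟨M, hM, rfl⟩

lemma matchNum_exists (P : SimpleGraph V) :
    ∃ M : P.Subgraph, M.IsMatching ∧ M.edgeSet.ncard = matchNum P :=
  Nat.sSup_mem (matchNum_set_nonempty P) (matchNum_set_bddAbove P)

/-- helper: an edge of a matching containing a vertex is determined by that vertex -/
lemma matching_edge_unique {P : SimpleGraph V} {M : P.Subgraph} (hM : M.IsMatching)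
    {e₁ e₂ : Sym2 V} (h₁ : e₁ ∈ M.edgeSet) (h₂ : e₂ ∈ M.edgeSet) {k : V}
    (hk₁ : k ∈ e₁) (hk₂ : k ∈ e₂) : e₁ = e₂ := by
  obtain ⟨b₁, rfl⟩ := Sym2.mem_iff_exists.mp hk₁
  obtain ⟨b₂, rfl⟩ := Sym2.mem_iff_exists.mp hk₂
  rw [Subgraph.mem_edgeSet] at h₁ h₂
  obtain ⟨w, hw, huniq⟩ := hM (M.edge_vert h₁)
  rw [huniq b₁ h₁, huniq b₂ h₂]

/-- Weak duality: any matching is at most as large as any "cover" of its edges. -/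
lemma matching_card_le {P : SimpleGraph V} (M : P.Subgraph)
    (hM : M.IsMatching) (K : Finset V) (hK : ∀ u v, M.Adj u v → u ∈ K ∨ v ∈ K) :
    M.edgeSet.ncard ≤ K.card := by
  classical
  have hex : ∀ e ∈ M.edgeSet, ∃ k, k ∈ K ∧ k ∈ e := by
    intro e he
    induction e with
    | _ u v =>
      rw [Subgraph.mem_edgeSet] at he
      rcases hK u v he with h | h
      · exact ⟨u, h, by simp⟩
      · exact ⟨v, h, by simp⟩
  by_cases hV : Nonempty V
  · set f : Sym2 V → V := fun e =>
      if he : ∃ k, k ∈ K ∧ k ∈ e then he.choose else Classical.arbitrary V with hf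
    have hmem : ∀ e ∈ M.edgeSet, f e ∈ K ∧ f e ∈ e := by
      intro e he
      have h := hex e he
      rw [hf]
      simp only [dif_pos h]
      exact h.choose_spec
    have hinj : Set.InjOn f M.edgeSet := by
      intro e₁ h₁ e₂ h₂ heq
      exact matching_edge_unique hM h₁ h₂ (hmem e₁ h₁).2 (heq ▸ (hmem e₂ h₂).2)
    have := Set.ncard_le_ncard_of_injOn f (fun e he => by
      simpa using (hmem e he).1) hinj (K.finite_toSet)
    simpa using this
  · have : M.edgeSet = ∅ := by
      ext e
      induction e with
      | _ u v => exact iff_of_false (fun _ => hV ⟨u⟩) (by simp)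
    simp [this]

lemma matchNum_le_cover (P : SimpleGraph V) (K : Finset V)
    (hK : ∀ u v, P.Adj u v → u ∈ K ∨ v ∈ K) : matchNum P ≤ K.card := by
  obtain ⟨M, hM, hcard⟩ := matchNum_exists P
  rw [← hcard]
  exact matching_card_le M hM K (fun u v h => hK u v (M.adj_sub h))

/-- Build a matching from an injective system of edges. -/
lemma exists_matching_of_injOn {P : SimpleGraph V} (Sf : Finset V) (g : V → V)
    (h1 : ∀ x ∈ Sf, P.Adj x (g x))
    (h2 : Set.InjOn g ↑Sf)
    (hd : ∀ x ∈ Sf, ∀ y ∈ Sf, g x ≠ y) :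
    ∃ M : P.Subgraph, M.IsMatching ∧ Sf.card ≤ M.edgeSet.ncard := by
  classical
  let M : P.Subgraph :=
    { verts := ↑Sf ∪ (g '' ↑Sf)
      Adj := fun u v => (u ∈ Sf ∧ v = g u) ∨ (v ∈ Sf ∧ u = g v)
      adj_sub := by
        rintro u v (⟨h, rfl⟩ | ⟨h, rfl⟩)
        · exact h1 u h
        · exact (h1 v h).symm
      edge_vert := by
        rintro u v (⟨h, rfl⟩ | ⟨h, rfl⟩)
        · exact Or.inl h
        · exact Or.inr ⟨v, h, rfl⟩
      symm := by
        constructor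
        rintro u v (h | h)
        · exact Or.inr h
        · exact Or.inl h }
  have hMadj : ∀ u v, M.Adj u v ↔ (u ∈ Sf ∧ v = g u) ∨ (v ∈ Sf ∧ u = g v) := fun u v => Iff.rfl
  have hmatch : M.IsMatching := by
    intro v hv
    rcases hv with hv | ⟨x, hx, rfl⟩
    · rw [Finset.mem_coe] at hv
      refine ⟨g v, Or.inl ⟨hv, rfl⟩, ?_⟩
      rintro y (⟨_, rfl⟩ | ⟨hy, hgy⟩)
      · rfl
      · exact absurd hgy.symm (hd y hy v hv)
    · rw [Finset.mem_coe] at hx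
      refine ⟨x, Or.inr ⟨hx, rfl⟩, ?_⟩
      rintro y (⟨hgx, _⟩ | ⟨hy, hgy⟩)
      · exact absurd rfl (hd x hx (g x) hgx)
      · exact h2 hy hx hgy.symm
  refine ⟨M, hmatch, ?_⟩
  have hmap : ∀ x ∈ (↑Sf : Set V), s(x, g x) ∈ M.edgeSet := by
    intro x hx
    rw [Subgraph.mem_edgeSet]
    exact Or.inl ⟨hx, rfl⟩
  have hinj : Set.InjOn (fun x => s(x, g x)) ↑Sf := by
    intro x hx y hy heq
    simp only [Sym2.eq_iff] at heq
    rcases heq with ⟨h, _⟩ | ⟨hxgy, _⟩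
    · exact h
    · exact absurd hxgy.symm (hd y hy x hx)
  have := Set.ncard_le_ncard_of_injOn _ hmap hinj (Set.toFinite _)
  simpa using this

end AuxEDCS


section Koenig

variable {V : Type*} [Fintype V]

set_option maxHeartbeats 1000000 in
lemma exists_koenig_cover (P : SimpleGraph V) (L R : Set V)
    (hpart : ∀ w, w ∈ L ↔ w ∉ R)
    (hbip : ∀ u v, P.Adj u v → (u ∈ L ∧ v ∈ R) ∨ (u ∈ R ∧ v ∈ L)) :
    ∃ K : Finset V, (∀ u v, P.Adj u v → u ∈ K ∨ v ∈ K) ∧ K.card ≤ matchNum P := by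
  classical
  set Lf : Finset V := (L.toFinite).toFinset with hLf
  have hLf_mem : ∀ v, v ∈ Lf ↔ v ∈ L := fun v => Set.Finite.mem_toFinset _
  set nb : V → Finset V := fun v => ((P.neighborSet v).toFinite).toFinset with hnb
  have hnb_mem : ∀ v u, u ∈ nb v ↔ P.Adj v u := by
    intro v u
    simp [hnb, Set.Finite.mem_toFinset, mem_neighborSet]
  set defi : Finset V → ℤ := fun A => (A.card : ℤ) - ((A.biUnion nb).card : ℤ) with hdefi
  have hne : ((Lf.powerset).image defi).Nonempty :=
    ⟨defi ∅, Finset.mem_image_of_mem _ (Finset.empty_mem_powerset _)⟩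
  set D : ℤ := ((Lf.powerset).image defi).max' hne with hD
  have hDle : ∀ A ∈ Lf.powerset, defi A ≤ D := fun A hA =>
    Finset.le_max' _ _ (Finset.mem_image_of_mem _ hA)
  have hD0 : 0 ≤ D := by
    have h := hDle ∅ (Finset.empty_mem_powerset Lf)
    have h0 : defi ∅ = 0 := by simp [hdefi]
    rwa [h0] at h
  obtain ⟨Astar, hAstar_pow, hAstar⟩ : ∃ A ∈ Lf.powerset, defi A = D := by
    obtain ⟨A, hA, hAeq⟩ := Finset.mem_image.mp (Finset.max'_mem _ hne)
    exact ⟨A, hA, hAeq⟩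
  set Dn : ℕ := D.toNat with hDn
  have hDnD : (Dn : ℤ) = D := Int.toNat_of_nonneg hD0
  -- Hall's theorem with Dn dummy vertices
  set tfun : {x // x ∈ Lf} → Finset (V ⊕ Fin Dn) :=
    fun x => ((nb x.1).image Sum.inl) ∪ (Finset.univ.image Sum.inr) with htfun
  have hall : ∀ s : Finset {x // x ∈ Lf}, s.card ≤ (s.biUnion tfun).card := by
    intro s
    rcases s.eq_empty_or_nonempty with rfl | ⟨x0, hx0⟩
    · simp
    · set A : Finset V := s.image Subtype.val with hA
      have hAcard : A.card = s.card := Finset.card_image_of_injective s Subtype.val_injective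
      have hApow : A ∈ Lf.powerset := by
        rw [Finset.mem_powerset]
        intro a ha
        obtain ⟨x, hx, rfl⟩ := Finset.mem_image.mp ha
        exact x.2
      have hsub : ((A.biUnion nb).image Sum.inl) ∪ (Finset.univ.image Sum.inr)
          ⊆ s.biUnion tfun := by
        intro z hz
        rcases Finset.mem_union.mp hz with hz | hz
        · obtain ⟨a, ha, rfl⟩ := Finset.mem_image.mp hz
          obtain ⟨w, hw, haw⟩ := Finset.mem_biUnion.mp ha
          obtain ⟨x, hx, rfl⟩ := Finset.mem_image.mp hw
          exact Finset.mem_biUnion.mpr ⟨x, hx,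
            Finset.mem_union_left _ (Finset.mem_image_of_mem _ haw)⟩
        · exact Finset.mem_biUnion.mpr ⟨x0, hx0, Finset.mem_union_right _ hz⟩
      have hdisj : Disjoint ((A.biUnion nb).image Sum.inl)
          ((Finset.univ : Finset (Fin Dn)).image Sum.inr) := by
        rw [Finset.disjoint_left]
        rintro z hz1 hz2
        obtain ⟨a, _, rfl⟩ := Finset.mem_image.mp hz1
        obtain ⟨d, _, hd⟩ := Finset.mem_image.mp hz2
        exact Sum.inl_ne_inr hd.symm
      have hcardu : ((A.biUnion nb).image Sum.inl ∪
          (Finset.univ : Finset (Fin Dn)).image Sum.inr).card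
          = (A.biUnion nb).card + Dn := by
        rw [Finset.card_union_of_disjoint hdisj,
          Finset.card_image_of_injective _ Sum.inl_injective,
          Finset.card_image_of_injective _ Sum.inr_injective, Finset.card_univ,
          Fintype.card_fin]
      have hle := Finset.card_le_card hsub
      rw [hcardu] at hle
      have hdef : defi A ≤ D := hDle A hApow
      rw [hdefi] at hdef
      simp only at hdef
      have : A.card ≤ (A.biUnion nb).card + Dn := by omega
      omega
  obtain ⟨f, hfinj, hfmem⟩ := (Finset.all_card_le_biUnion_card_iff_exists_injective tfun).mp hall
  set S' : Finset {x // x ∈ Lf} := Finset.univ.filter (fun x => (f x).isLeft) with hS'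
  have hcardS' : Lf.card ≤ S'.card + Dn := by
    have himg : (Finset.univ.filter (fun x => ¬ (f x).isLeft = true)).image f
        ⊆ (Finset.univ : Finset (Fin Dn)).image Sum.inr := by
      intro z hz
      obtain ⟨x, hx, rfl⟩ := Finset.mem_image.mp hz
      have hnl := (Finset.mem_filter.mp hx).2
      have := hfmem x
      rw [htfun] at this
      rcases Finset.mem_union.mp this with h | h
      · obtain ⟨a, _, ha⟩ := Finset.mem_image.mp h
        rw [← ha] at hnl
        simp at hnl
      · exact h
    have h1 : (Finset.univ.filter (fun x => ¬ (f x).isLeft = true)).card ≤ Dn := by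
      calc (Finset.univ.filter (fun x => ¬ (f x).isLeft = true)).card
          = ((Finset.univ.filter (fun x => ¬ (f x).isLeft = true)).image f).card :=
            (Finset.card_image_of_injective _ hfinj).symm
        _ ≤ ((Finset.univ : Finset (Fin Dn)).image Sum.inr).card := Finset.card_le_card himg
        _ ≤ Dn := by
            rw [Finset.card_image_of_injective _ Sum.inr_injective, Finset.card_univ,
              Fintype.card_fin]
    have h2 := Finset.card_filter_add_card_filter_not
      (s := (Finset.univ : Finset {x // x ∈ Lf})) (p := fun x => (f x).isLeft = true)
    have h3 : Fintype.card {x // x ∈ Lf} = Lf.card := Fintype.card_coe Lf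
    rw [Finset.card_univ] at h2
    rw [← hS'] at h2
    omega
  set vfun : {x // x ∈ Lf} → V := fun x => Sum.elim id (fun _ => x.1) (f x) with hvfun
  have hvmem : ∀ x ∈ S', f x = Sum.inl (vfun x) ∧ vfun x ∈ nb x.1 := by
    intro x hx
    have hl := (Finset.mem_filter.mp hx).2
    have hm := hfmem x
    rw [htfun] at hm
    rcases Finset.mem_union.mp hm with h | h
    · obtain ⟨a, ha, hae⟩ := Finset.mem_image.mp h
      have hv : vfun x = a := by
        simp only [hvfun]
        rw [← hae]
        rfl
      constructor
      · rw [hv, hae]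
      · rw [hv]
        exact ha
    · obtain ⟨d, _, hd⟩ := Finset.mem_image.mp h
      rw [← hd] at hl
      simp at hl
  -- build the matching
  set Sff : Finset V := S'.image Subtype.val with hSff
  have hSffcard : Sff.card = S'.card := Finset.card_image_of_injective _ Subtype.val_injective
  set gg : V → V := fun v => if h : ∃ x, x ∈ S' ∧ (x : V) = v then vfun h.choose else v with hgg
  have hkey : ∀ x ∈ S', gg x.1 = vfun x := by
    intro x hx
    have hex : ∃ y, y ∈ S' ∧ (y : V) = x.1 := ⟨x, hx, rfl⟩
    rw [hgg]
    simp only [dif_pos hex]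
    have hc := hex.choose_spec
    have : hex.choose = x := Subtype.ext hc.2
    rw [this]
  have hadj' : ∀ x ∈ S', P.Adj x.1 (vfun x) := by
    intro x hx
    exact (hnb_mem _ _).mp (hvmem x hx).2
  have hvR : ∀ x ∈ S', vfun x ∈ R := by
    intro x hx
    have hL : (x : V) ∈ L := (hLf_mem _).mp x.2
    rcases hbip _ _ (hadj' x hx) with ⟨_, h⟩ | ⟨h, _⟩
    · exact h
    · exact absurd h ((hpart _).mp hL)
  have h1 : ∀ v ∈ Sff, P.Adj v (gg v) := by
    intro v hv
    obtain ⟨x, hx, rfl⟩ := Finset.mem_image.mp hv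
    rw [hkey x hx]
    exact hadj' x hx
  have h2 : Set.InjOn gg ↑Sff := by
    intro u hu w hw heq
    rw [Finset.mem_coe] at hu hw
    obtain ⟨x, hx, rfl⟩ := Finset.mem_image.mp hu
    obtain ⟨y, hy, rfl⟩ := Finset.mem_image.mp hw
    rw [hkey x hx, hkey y hy] at heq
    have : f x = f y := by rw [(hvmem x hx).1, (hvmem y hy).1, heq]
    exact congrArg Subtype.val (hfinj this)
  have hd : ∀ u ∈ Sff, ∀ w ∈ Sff, gg u ≠ w := by
    intro u hu w hw
    obtain ⟨x, hx, rfl⟩ := Finset.mem_image.mp hu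
    obtain ⟨y, hy, rfl⟩ := Finset.mem_image.mp hw
    rw [hkey x hx]
    intro hcon
    have hR : vfun x ∈ R := hvR x hx
    have hL : (y : V) ∈ L := (hLf_mem _).mp y.2
    rw [hcon] at hR
    exact (hpart _).mp hL hR
  obtain ⟨M, hmatch, hMcard⟩ := exists_matching_of_injOn Sff gg h1 h2 hd
  have hμ : Lf.card ≤ matchNum P + Dn := by
    calc Lf.card ≤ S'.card + Dn := hcardS'
      _ = Sff.card + Dn := by rw [hSffcard]
      _ ≤ M.edgeSet.ncard + Dn := Nat.add_le_add_right hMcard _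
      _ ≤ matchNum P + Dn := Nat.add_le_add_right (le_matchNum P M hmatch) _
  -- the cover
  set NA : Finset V := Astar.biUnion nb with hNA
  refine ⟨(Lf \ Astar) ∪ NA, ?_, ?_⟩
  · intro u v hadj
    rcases hbip u v hadj with ⟨huL, _⟩ | ⟨_, hvL⟩
    · have huLf : u ∈ Lf := (hLf_mem u).mpr huL
      by_cases hu : u ∈ Astar
      · exact Or.inr (Finset.mem_union_right _
          (Finset.mem_biUnion.mpr ⟨u, hu, (hnb_mem u v).mpr hadj⟩))
      · exact Or.inl (Finset.mem_union_left _ (Finset.mem_sdiff.mpr ⟨huLf, hu⟩))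
    · have hvLf : v ∈ Lf := (hLf_mem v).mpr hvL
      by_cases hv : v ∈ Astar
      · exact Or.inl (Finset.mem_union_right _
          (Finset.mem_biUnion.mpr ⟨v, hv, (hnb_mem v u).mpr hadj.symm⟩))
      · exact Or.inr (Finset.mem_union_left _ (Finset.mem_sdiff.mpr ⟨hvLf, hv⟩))
  · have hsub : Astar ⊆ Lf := Finset.mem_powerset.mp hAstar_pow
    have hcard1 : ((Lf \ Astar) ∪ NA).card ≤ (Lf.card - Astar.card) + NA.card := by
      have := Finset.card_union_le (Lf \ Astar) NA
      rw [Finset.card_sdiff_of_subset hsub] at this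
      exact this
    have hAeq : (Astar.card : ℤ) - (NA.card : ℤ) = D := by
      rw [← hAstar, hdefi]
    have hAcard : Astar.card ≤ Lf.card := Finset.card_le_card hsub
    omega

end Koenig


section Counting

variable {V : Type*} [Fintype V]

set_option maxHeartbeats 1000000 in
/-- The key degree-counting bound: a matching in the uncovered part is small. -/
lemma edcs_counting (H G' : SimpleGraph V) (L R : Set V) (C : Finset V) (β βm : ℕ)
    (hpart : ∀ w, w ∈ L ↔ w ∉ R)
    (hbip : ∀ u v, G'.Adj u v → (u ∈ L ∧ v ∈ R) ∨ (u ∈ R ∧ v ∈ L))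
    (hP1 : ∀ u v, H.Adj u v → deg H u + deg H v ≤ β)
    (hG' : ∀ u v, G'.Adj u v → (u ∉ C ∧ v ∉ C) ∧ βm ≤ deg H u + deg H v)
    (hC : ∀ u v, H.Adj u v → u ∈ C ∨ v ∈ C) :
    2 * (matchNum G' : ℝ) * (βm : ℝ)^2 ≤ (C.card : ℝ) * (β : ℝ)^2 := by
  classical
  obtain ⟨M', hM', hM'card⟩ := matchNum_exists G'
  set Sf : Finset V := (M'.verts.toFinite).toFinset with hSf
  have hSf_mem : ∀ v, v ∈ Sf ↔ v ∈ M'.verts := fun v => Set.Finite.mem_toFinset _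
  set p : V → V := fun v => if h : v ∈ M'.verts then (hM' h).choose else v with hp
  have hpadj : ∀ v ∈ M'.verts, M'.Adj v (p v) := by
    intro v hv
    rw [hp]
    simp only [dif_pos hv]
    exact (hM' hv).choose_spec.1
  have hpmem : ∀ v ∈ M'.verts, p v ∈ M'.verts := fun v hv => M'.edge_vert (hpadj v hv).symm
  have hpp : ∀ v ∈ M'.verts, p (p v) = v := by
    intro v hv
    have h2 := hpadj _ (hpmem v hv)
    have h3 : M'.Adj (p v) v := (hpadj v hv).symm
    obtain ⟨w, _, huniq⟩ := hM' (hpmem v hv)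
    rw [huniq _ h2, huniq _ h3]
  have hG'adj : ∀ v ∈ M'.verts, G'.Adj v (p v) := fun v hv => M'.adj_sub (hpadj v hv)
  set d : V → ℝ := fun v => ((deg H v : ℕ) : ℝ) with hd
  have hd0 : ∀ v, 0 ≤ d v := fun v => Nat.cast_nonneg _
  -- lower bound on degree sum
  have hlow : (Sf.card : ℝ) * (βm : ℝ) ≤ 2 * ∑ v ∈ Sf, d v := by
    have hterm : ∀ v ∈ Sf, (βm : ℝ) ≤ d v + d (p v) := by
      intro v hv
      have h := (hG' _ _ (hG'adj v ((hSf_mem v).mp hv))).2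
      rw [hd]
      push_cast
      exact_mod_cast h
    have hsum1 : ∑ v ∈ Sf, (βm : ℝ) ≤ ∑ v ∈ Sf, (d v + d (p v)) := Finset.sum_le_sum hterm
    have hsum2 : ∑ v ∈ Sf, d (p v) = ∑ v ∈ Sf, d v := by
      refine Finset.sum_nbij' p p ?_ ?_ ?_ ?_ ?_
      · intro a ha
        exact (hSf_mem _).mpr (hpmem a ((hSf_mem a).mp ha))
      · intro a ha
        exact (hSf_mem _).mpr (hpmem a ((hSf_mem a).mp ha))
      · intro a ha
        exact hpp a ((hSf_mem a).mp ha)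
      · intro a ha
        exact hpp a ((hSf_mem a).mp ha)
      · intro a ha
        rfl
    rw [Finset.sum_const, nsmul_eq_mul] at hsum1
    rw [Finset.sum_add_distrib, hsum2] at hsum1
    linarith
  -- neighborhoods of Sf vertices lie in C
  have hnotC : ∀ v ∈ Sf, v ∉ C := by
    intro v hv
    exact (hG' _ _ (hG'adj v ((hSf_mem v).mp hv))).1.1
  have hnbC : ∀ v ∈ Sf, ∀ w, H.Adj v w → w ∈ C := by
    intro v hv w hw
    rcases hC v w hw with h | h
    · exact absurd h (hnotC v hv)
    · exact h
  set nbH : V → Finset V := fun v => ((H.neighborSet v).toFinite).toFinset with hnbH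
  have hnbH_mem : ∀ v u, u ∈ nbH v ↔ H.Adj v u := by
    intro v u
    simp [hnbH, Set.Finite.mem_toFinset, SimpleGraph.mem_neighborSet]
  have hnbH_card : ∀ v, ((nbH v).card : ℝ) = d v := by
    intro v
    have h : (nbH v).card = deg H v := by
      simp only [hnbH, deg]
      exact (Set.ncard_eq_toFinset_card _ _).symm
    rw [hd, h]
  -- upper bound on degree squares
  have hup : ∑ v ∈ Sf, (d v)^2 ≤ (C.card : ℝ) * ((β : ℝ)^2 / 4) := by
    have hstep1 : ∀ v ∈ Sf, (d v)^2 = ∑ c ∈ C, (if H.Adj v c then d v else 0) := by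
      intro v hv
      rw [← Finset.sum_filter]
      have hfe : C.filter (fun c => H.Adj v c) = nbH v := by
        ext c
        simp only [Finset.mem_filter, hnbH_mem]
        exact ⟨fun h => h.2, fun h => ⟨hnbC v hv c h, h⟩⟩
      rw [hfe, Finset.sum_const, nsmul_eq_mul, hnbH_card v, sq]
    rw [Finset.sum_congr rfl hstep1, Finset.sum_comm]
    have hinner : ∀ c ∈ C, ∑ v ∈ Sf, (if H.Adj v c then d v else 0) ≤ (β : ℝ)^2/4 := by
      intro c _
      rw [← Finset.sum_filter]
      set W : Finset V := Sf.filter (fun v => H.Adj v c) with hW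
      rcases W.eq_empty_or_nonempty with hWe | ⟨v₀, hv₀⟩
      · rw [hWe]
        simp
        positivity
      · have hv₀adj : H.Adj v₀ c := (Finset.mem_filter.mp hv₀).2
        have hβc : d v₀ + d c ≤ (β : ℝ) := by
          have := hP1 _ _ hv₀adj
          rw [hd]
          push_cast
          exact_mod_cast this
        have hterm : ∀ v ∈ W, d v ≤ (β : ℝ) - d c := by
          intro v hvW
          have hadj : H.Adj v c := (Finset.mem_filter.mp hvW).2
          have := hP1 _ _ hadj
          rw [hd]
          push_cast
          have : ((deg H v : ℕ) : ℝ) + ((deg H c : ℕ) : ℝ) ≤ (β : ℝ) := by exact_mod_cast this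
          linarith
        have hsum := Finset.sum_le_sum hterm
        rw [Finset.sum_const, nsmul_eq_mul] at hsum
        have hWcard : (W.card : ℝ) ≤ d c := by
          rw [← hnbH_card c]
          have hWsub : W ⊆ nbH c := by
            intro v hvW
            rw [hnbH_mem]
            exact ((Finset.mem_filter.mp hvW).2).symm
          exact_mod_cast Finset.card_le_card hWsub
        have hpos : (0:ℝ) ≤ (β : ℝ) - d c := by
          have := hd0 v₀
          linarith
        have h1 : (W.card : ℝ) * ((β : ℝ) - d c) ≤ d c * ((β : ℝ) - d c) :=
          mul_le_mul_of_nonneg_right hWcard hpos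
        have h2 : d c * ((β : ℝ) - d c) ≤ (β : ℝ)^2/4 := by nlinarith [sq_nonneg ((β:ℝ) - 2 * d c)]
        linarith
    calc ∑ c ∈ C, ∑ v ∈ Sf, (if H.Adj v c then d v else 0)
        ≤ ∑ _c ∈ C, (β : ℝ)^2/4 := Finset.sum_le_sum hinner
      _ = (C.card : ℝ) * ((β : ℝ)^2/4) := by rw [Finset.sum_const, nsmul_eq_mul]
  -- Cauchy-Schwarz
  have hcs : (∑ v ∈ Sf, d v)^2 ≤ (Sf.card : ℝ) * ∑ v ∈ Sf, (d v)^2 := by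
    exact_mod_cast sq_sum_le_card_mul_sum_sq (s := Sf) (f := d)
  -- 2 * matchNum G' ≤ Sf.card
  have h2m : 2 * matchNum G' ≤ Sf.card := by
    set SL : Finset V := Sf.filter (fun v => v ∈ L) with hSL
    set SR : Finset V := Sf.filter (fun v => v ∉ L) with hSR
    have hmL : matchNum G' ≤ SL.card := by
      rw [← hM'card]
      refine matching_card_le M' hM' SL ?_
      intro u v huv
      have hu : u ∈ Sf := (hSf_mem u).mpr (M'.edge_vert huv)
      have hv : v ∈ Sf := (hSf_mem v).mpr (M'.edge_vert huv.symm)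
      rcases hbip u v (M'.adj_sub huv) with ⟨h, _⟩ | ⟨_, h⟩
      · exact Or.inl (Finset.mem_filter.mpr ⟨hu, h⟩)
      · exact Or.inr (Finset.mem_filter.mpr ⟨hv, h⟩)
    have hmR : matchNum G' ≤ SR.card := by
      rw [← hM'card]
      refine matching_card_le M' hM' SR ?_
      intro u v huv
      have hu : u ∈ Sf := (hSf_mem u).mpr (M'.edge_vert huv)
      have hv : v ∈ Sf := (hSf_mem v).mpr (M'.edge_vert huv.symm)
      rcases hbip u v (M'.adj_sub huv) with ⟨_, h⟩ | ⟨h, _⟩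
      · exact Or.inr (Finset.mem_filter.mpr ⟨hv, fun hL => (hpart v).mp hL h⟩)
      · exact Or.inl (Finset.mem_filter.mpr ⟨hu, fun hL => (hpart u).mp hL h⟩)
    have hdisj : Disjoint SL SR := by
      rw [Finset.disjoint_left]
      intro a haL haR
      exact (Finset.mem_filter.mp haR).2 (Finset.mem_filter.mp haL).2
    have hun : SL ∪ SR = Sf := by
      ext a
      simp only [Finset.mem_union, hSL, hSR, Finset.mem_filter]
      by_cases h : a ∈ L <;> tauto
    have hcards : SL.card + SR.card = Sf.card := by
      rw [← Finset.card_union_of_disjoint hdisj, hun]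
    omega
  -- combine
  rcases Nat.eq_zero_or_pos Sf.card with hzero | hposn
  · have : matchNum G' = 0 := by omega
    rw [this]
    simp
    positivity
  · have hSfpos : (0:ℝ) < (Sf.card : ℝ) := by exact_mod_cast hposn
    have hkey : (Sf.card : ℝ) * (βm : ℝ)^2 ≤ (C.card : ℝ) * (β : ℝ)^2 := by
      have hsq : ((Sf.card : ℝ) * (βm : ℝ))^2 ≤ (Sf.card : ℝ) * ((C.card : ℝ) * (β : ℝ)^2) := by
        calc ((Sf.card : ℝ) * (βm : ℝ))^2 ≤ (2 * ∑ v ∈ Sf, d v)^2 := by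
              have h0 : (0:ℝ) ≤ (Sf.card : ℝ) * (βm : ℝ) := by positivity
              nlinarith
          _ = 4 * (∑ v ∈ Sf, d v)^2 := by ring
          _ ≤ 4 * ((Sf.card : ℝ) * ∑ v ∈ Sf, (d v)^2) := by linarith
          _ ≤ 4 * ((Sf.card : ℝ) * ((C.card : ℝ) * ((β : ℝ)^2 / 4))) := by
              have := mul_le_mul_of_nonneg_left hup (le_of_lt hSfpos)
              linarith
          _ = (Sf.card : ℝ) * ((C.card : ℝ) * (β : ℝ)^2) := by ring
      have h' : (Sf.card:ℝ) * ((Sf.card:ℝ) * (βm:ℝ)^2) ≤ (Sf.card:ℝ) * ((C.card:ℝ) * (β:ℝ)^2) := by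
        calc (Sf.card:ℝ) * ((Sf.card:ℝ) * (βm:ℝ)^2) = ((Sf.card : ℝ) * (βm : ℝ))^2 := by ring
          _ ≤ (Sf.card:ℝ) * ((C.card:ℝ) * (β:ℝ)^2) := hsq
      exact le_of_mul_le_mul_left h' hSfpos
    have h2m' : 2 * (matchNum G' : ℝ) ≤ (Sf.card : ℝ) := by exact_mod_cast h2m
    have h3 : 2 * (matchNum G' : ℝ) * (βm:ℝ)^2 ≤ (Sf.card:ℝ) * (βm:ℝ)^2 :=
      mul_le_mul_of_nonneg_right h2m' (sq_nonneg _)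
    linarith

end Counting


set_option maxHeartbeats 1000000 in
/-- EDCS lemma for bipartite graphs: if `G` is bipartite with parts `L`, `R` of equal size
and `H` is an EDCS(`G`, `β`, `β⁻`) with `ε < 1/2`, `λ ≤ ε/4`, `β ≥ 2/λ`, `β⁻ ≥ (1-λ)β`,
then `μ(G) ≤ (3/2 + ε)·μ(H)`. -/
theorem stmt8 {V : Type*} [Fintype V] (G H : SimpleGraph V) (hHG : H ≤ G)
    (L R : Set V) (hpart : ∀ w, w ∈ L ↔ w ∉ R)
    (hbip : ∀ u v, G.Adj u v → (u ∈ L ∧ v ∈ R) ∨ (u ∈ R ∧ v ∈ L))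
    (hcard : L.ncard = R.ncard)
    (ε lam : ℝ) (β βm : ℕ)
    (hε0 : 0 < ε) (hε : ε < 1/2) (hlam0 : 0 < lam) (hlam : lam ≤ ε/4)
    (hβ : 2 / lam ≤ (β : ℝ)) (hβm : (1 - lam) * β ≤ (βm : ℝ))
    (hP1 : ∀ u v, H.Adj u v → deg H u + deg H v ≤ β)
    (hP2 : ∀ u v, G.Adj u v → ¬ H.Adj u v → βm ≤ deg H u + deg H v) :
    (matchNum G : ℝ) ≤ (3/2 + ε) * matchNum H := by
  classical
  -- König cover of H
  obtain ⟨C, hC, hCcard⟩ := exists_koenig_cover H L R hpart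
    (fun u v h => hbip u v (hHG h))
  -- the graph on uncovered vertices
  set G' : SimpleGraph V :=
    { Adj := fun u v => G.Adj u v ∧ u ∉ C ∧ v ∉ C
      symm := by
        constructor
        rintro u v ⟨h, hu, hv⟩
        exact ⟨h.symm, hv, hu⟩
      loopless := by
        constructor
        rintro v ⟨h, _, _⟩
        exact G.loopless.irrefl v h } with hG'def
  have hG'adj : ∀ u v, G'.Adj u v ↔ G.Adj u v ∧ u ∉ C ∧ v ∉ C := fun u v => Iff.rfl
  have hG'bip : ∀ u v, G'.Adj u v → (u ∈ L ∧ v ∈ R) ∨ (u ∈ R ∧ v ∈ L) :=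
    fun u v h => hbip u v h.1
  -- König cover of G'
  obtain ⟨K', hK', hK'card⟩ := exists_koenig_cover G' L R hpart hG'bip
  -- C ∪ K' covers G
  have hcover : ∀ u v, G.Adj u v → u ∈ C ∪ K' ∨ v ∈ C ∪ K' := by
    intro u v h
    by_cases hu : u ∈ C
    · exact Or.inl (Finset.mem_union_left _ hu)
    by_cases hv : v ∈ C
    · exact Or.inr (Finset.mem_union_left _ hv)
    rcases hK' u v ⟨h, hu, hv⟩ with h' | h'
    · exact Or.inl (Finset.mem_union_right _ h')
    · exact Or.inr (Finset.mem_union_right _ h')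
  have hμG : matchNum G ≤ C.card + matchNum G' := by
    calc matchNum G ≤ (C ∪ K').card := matchNum_le_cover G _ hcover
      _ ≤ C.card + K'.card := Finset.card_union_le _ _
      _ ≤ C.card + matchNum G' := Nat.add_le_add_left hK'card _
  -- counting bound
  have hcount := edcs_counting H G' L R C β βm hpart hG'bip hP1
    (fun u v h => by
      refine ⟨⟨h.2.1, h.2.2⟩, hP2 u v h.1 ?_⟩
      intro hH
      rcases hC u v hH with hc | hc
      · exact h.2.1 hc
      · exact h.2.2 hc) hC
  -- real arithmetic
  set ν : ℝ := (matchNum H : ℝ) with hν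
  set m' : ℝ := (matchNum G' : ℝ) with hm'
  have hν0 : 0 ≤ ν := Nat.cast_nonneg _
  have hm'0 : 0 ≤ m' := Nat.cast_nonneg _
  have hCν : (C.card : ℝ) ≤ ν := by
    rw [hν]
    exact_mod_cast hCcard
  have hμG' : (matchNum G : ℝ) ≤ ν + m' := by
    have h0 : (matchNum G : ℝ) ≤ (C.card : ℝ) + (matchNum G' : ℝ) := by exact_mod_cast hμG
    rw [hν, hm']
    have h1 : (C.card : ℝ) ≤ (matchNum H : ℝ) := by exact_mod_cast hCcard
    linarith
  have hb0 : (0:ℝ) < (β : ℝ) := by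
    have h2l : (0:ℝ) < 2 / lam := by positivity
    linarith
  have hlam8 : lam < 1/8 := by linarith
  have hbm0 : (0:ℝ) < (βm : ℝ) := by nlinarith
  have ha0 : (0:ℝ) ≤ (1 - lam) * (β:ℝ) := by nlinarith
  have hs := mul_self_le_mul_self ha0 hβm
  have hbmsq : (1 - lam)^2 * (β : ℝ)^2 ≤ (βm : ℝ)^2 := by nlinarith [hs]
  have hfac : (1:ℝ) ≤ (1 + 2*ε) * (1 - lam)^2 := by
    nlinarith [mul_le_mul_of_nonneg_left hlam (le_of_lt hε0), sq_nonneg lam,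
      mul_pos hε0 hlam0]
  have hkey : (β : ℝ)^2 ≤ (1 + 2*ε) * (βm : ℝ)^2 := by
    have h2 : (1 + 2*ε) * ((1 - lam)^2 * (β:ℝ)^2) ≤ (1 + 2*ε) * (βm:ℝ)^2 :=
      mul_le_mul_of_nonneg_left hbmsq (by linarith)
    have h3 : (β:ℝ)^2 ≤ (1 + 2*ε) * ((1 - lam)^2 * (β:ℝ)^2) := by
      nlinarith [mul_le_mul_of_nonneg_left hfac (sq_nonneg (β:ℝ))]
    linarith
  -- from hcount : 2 * m' * βm^2 ≤ C.card * β^2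
  have h1 : 2 * m' * (βm:ℝ)^2 ≤ ν * ((1 + 2*ε) * (βm:ℝ)^2) := by
    calc 2 * m' * (βm:ℝ)^2 ≤ (C.card : ℝ) * (β:ℝ)^2 := hcount
      _ ≤ ν * (β:ℝ)^2 := mul_le_mul_of_nonneg_right hCν (sq_nonneg _)
      _ ≤ ν * ((1 + 2*ε) * (βm:ℝ)^2) := mul_le_mul_of_nonneg_left hkey hν0
  have h2 : 2 * m' ≤ (1 + 2*ε) * ν := by
    have hsq : (0:ℝ) < (βm:ℝ)^2 := by positivity
    have := (mul_le_mul_iff_of_pos_right hsq).mp (by linarith [h1] : (2 * m') * (βm:ℝ)^2 ≤ ((1 + 2*ε) * ν) * (βm:ℝ)^2)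
    linarith
  linarith
end

section
/- Let G be a bipartite graph with parts L, R of size n, let H be a subgraph of G, let A ⊆ L be a Hall witness set for H with B = N_H(A) satisfying |A| - |B| = n - μ(H). Then there exists a matching of size μ(G) - μ(H) in G between A and R\B. -/
open SimpleGraph

/-- If `A ⊆ L` is a Hall witness set for a subgraph `H` of a bipartite graph `G` (with parts
of size `n`), i.e. `|A| - |N_H(A)| = n - μ(H)`, then `G` contains a matching of size at least
`μ(G) - μ(H)` between `A` and `R \ N_H(A)`. -/
theorem stmt9 {V : Type*} [Fintype V] (G H : SimpleGraph V) (hHG : H ≤ G)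
    (L R : Set V) (n : ℕ) (hpart : ∀ w, w ∈ L ↔ w ∉ R)
    (hbip : ∀ u v, G.Adj u v → (u ∈ L ∧ v ∈ R) ∨ (u ∈ R ∧ v ∈ L))
    (hL : L.ncard = n) (hR : R.ncard = n)
    (A B : Set V) (hA : A ⊆ L) (hB : B = {w | ∃ a ∈ A, H.Adj a w})
    (hwitness : (A.ncard : ℤ) - B.ncard = (n : ℤ) - matchNum H) :
    ∃ M : G.Subgraph, M.IsMatching ∧
      (∀ u v, M.Adj u v → (u ∈ A ∧ v ∈ R \ B) ∨ (v ∈ A ∧ u ∈ R \ B)) ∧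
      matchNum G - matchNum H ≤ M.edgeSet.ncard := by
  classical
  -- a maximum matching of G exists
  have hmem : matchNum G ∈ {n | ∃ M : G.Subgraph, M.IsMatching ∧ M.edgeSet.ncard = n} := by
    apply Nat.sSup_mem
    · exact ⟨0, ⊥, fun v hv => by simp at hv, by simp⟩
    · refine ⟨Nat.card (Sym2 V), ?_⟩
      rintro m ⟨N, -, rfl⟩
      rw [← Set.ncard_univ]
      exact Set.ncard_le_ncard (Set.subset_univ _) Set.finite_univ
  obtain ⟨M, hM, hMcard⟩ := hmem
  -- partner function for M
  set p : V → V := fun v => if h : v ∈ M.verts then (hM h).choose else v with hp_def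
  have hp : ∀ v ∈ M.verts, M.Adj v (p v) := by
    intro v hv
    simp only [hp_def, dif_pos hv]
    exact (hM hv).choose_spec.1
  -- the restricted matching
  set M' : G.Subgraph :=
    { verts := {v | ∃ w, M.Adj v w ∧ ((v ∈ A ∧ w ∈ R \ B) ∨ (w ∈ A ∧ v ∈ R \ B))}
      Adj := fun v w => M.Adj v w ∧ ((v ∈ A ∧ w ∈ R \ B) ∨ (w ∈ A ∧ v ∈ R \ B))
      adj_sub := fun h => M.adj_sub h.1
      edge_vert := fun h => ⟨_, h⟩
      symm := ⟨fun v w h => ⟨h.1.symm, h.2.symm⟩⟩ } with hM'_def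
  have hM'adj : ∀ v w, M'.Adj v w ↔
      (M.Adj v w ∧ ((v ∈ A ∧ w ∈ R \ B) ∨ (w ∈ A ∧ v ∈ R \ B))) := fun _ _ => Iff.rfl
  have hM'match : M'.IsMatching := by
    rintro v ⟨w, hw⟩
    refine ⟨w, hw, fun y hy => ?_⟩
    exact (hM (M.edge_vert hw.1)).unique hy.1 hw.1
  -- key counting lemma : a matching has as many edges as left vertices
  have key : ∀ N : G.Subgraph, N.IsMatching → N.edgeSet.ncard = (N.verts ∩ L).ncard := by
    intro N hN
    set q : V → V := fun v => if h : v ∈ N.verts then (hN h).choose else v with hq_def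
    have hq : ∀ v ∈ N.verts, N.Adj v (q v) := by
      intro v hv
      simp only [hq_def, dif_pos hv]
      exact (hN hv).choose_spec.1
    set f : V → Sym2 V := fun v => s(v, q v) with hf_def
    have himg : f '' (N.verts ∩ L) = N.edgeSet := by
      apply Set.Subset.antisymm
      · rintro e ⟨v, ⟨hv, -⟩, rfl⟩
        exact Subgraph.mem_edgeSet.mpr (hq v hv)
      · intro e he
        induction e with
        | h u w =>
          rw [Subgraph.mem_edgeSet] at he
          have hG := N.adj_sub he
          rcases hbip u w hG with ⟨huL, hwR⟩ | ⟨huR, hwL⟩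
          · have hu : u ∈ N.verts := N.edge_vert he
            refine ⟨u, ⟨hu, huL⟩, ?_⟩
            have : q u = w := (hN hu).unique (hq u hu) he
            simp [hf_def, this]
          · have hw : w ∈ N.verts := N.edge_vert he.symm
            refine ⟨w, ⟨hw, hwL⟩, ?_⟩
            have : q w = u := (hN hw).unique (hq w hw) he.symm
            simp [hf_def, this, Sym2.eq_swap]
    have hinj : Set.InjOn f (N.verts ∩ L) := by
      rintro v₁ ⟨hv₁, hv₁L⟩ v₂ ⟨hv₂, hv₂L⟩ heq
      simp only [hf_def, Sym2.eq_iff] at heq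
      rcases heq with ⟨h, -⟩ | ⟨h₁, h₂⟩
      · exact h
      · have : N.Adj v₂ v₁ := by rw [h₁]; exact hq v₂ hv₂
        rcases hbip v₂ v₁ (N.adj_sub this) with ⟨-, hR'⟩ | ⟨hR', -⟩
        · exact absurd hR' ((hpart v₁).mp hv₁L)
        · exact absurd hR' ((hpart v₂).mp hv₂L)
    rw [← himg, Set.ncard_image_of_injOn hinj]
  -- the covering of left matched vertices
  set X2 : Set V := {v | v ∈ M.verts ∧ v ∈ A ∧ p v ∈ B} with hX2_def
  have hcover : M.verts ∩ L ⊆ (L \ A) ∪ X2 ∪ (M'.verts ∩ L) := by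
    rintro v ⟨hv, hvL⟩
    by_cases hvA : v ∈ A
    · by_cases hpB : p v ∈ B
      · exact Or.inl (Or.inr ⟨hv, hvA, hpB⟩)
      · have hadj := hp v hv
        have hG := M.adj_sub hadj
        have hwR : p v ∈ R := by
          rcases hbip v (p v) hG with ⟨-, h⟩ | ⟨h, -⟩
          · exact h
          · exact absurd h ((hpart v).mp hvL)
        refine Or.inr ⟨⟨p v, hadj, Or.inl ⟨hvA, hwR, hpB⟩⟩, hvL⟩
    · exact Or.inl (Or.inl ⟨hvL, hvA⟩)
  have hX2 : X2.ncard ≤ B.ncard := by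
    apply Set.ncard_le_ncard_of_injOn p (fun v hv => hv.2.2)
    rintro v₁ ⟨hv₁, -, -⟩ v₂ ⟨hv₂, -, -⟩ heq
    have h₁ : M.Adj (p v₂) v₁ := heq ▸ (hp v₁ hv₁).symm
    have h₂ : M.Adj (p v₂) v₂ := (hp v₂ hv₂).symm
    exact (hM (M.edge_vert h₁)).unique h₁ h₂
  have hdiff : (L \ A).ncard = n - A.ncard := by
    rw [Set.ncard_diff hA, hL]
  have hAn : A.ncard ≤ n := hL ▸ Set.ncard_le_ncard hA (Set.toFinite L)
  -- the chain of inequalities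
  have hchain : matchNum G ≤ (n - A.ncard) + B.ncard + M'.edgeSet.ncard := by
    calc matchNum G = M.edgeSet.ncard := hMcard.symm
      _ = (M.verts ∩ L).ncard := key M hM
      _ ≤ ((L \ A) ∪ X2 ∪ (M'.verts ∩ L)).ncard :=
          Set.ncard_le_ncard hcover (Set.toFinite _)
      _ ≤ ((L \ A) ∪ X2).ncard + (M'.verts ∩ L).ncard := Set.ncard_union_le _ _
      _ ≤ (L \ A).ncard + X2.ncard + (M'.verts ∩ L).ncard := by
          exact add_le_add_left (Set.ncard_union_le _ _) _
      _ = (L \ A).ncard + X2.ncard + M'.edgeSet.ncard := by rw [key M' hM'match]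
      _ ≤ (n - A.ncard) + B.ncard + M'.edgeSet.ncard := by
          rw [hdiff]; exact add_le_add_left (add_le_add_right hX2 _) _
  refine ⟨M', hM'match, fun u v h => h.2, ?_⟩
  omega
end

section
/- Let H be an EDCS of G with parameters (β, β-1). Let G_B be another graph on the same vertex set and M*_B a matching in G_B. Define H̃ = H ∪ {(u,v) ∈ M*_B : deg_H(u)+deg_H(v) ≤ β} and G̃ = G ∪ M*_B. Then H̃ is an EDCS(G̃, β+2, β-1). -/
open SimpleGraph

/-- If `H` is an EDCS(`G`, `β`, `β-1`), `M_B` is a matching (a graph of maximum degree `≤ 1`),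
`G̃ = G ∪ M_B`, and `H̃` consists of `H` together with all edges `(u,v)` of `M_B` with
`deg_H(u) + deg_H(v) ≤ β`, then `H̃` is an EDCS(`G̃`, `β+2`, `β-1`). -/
theorem stmt13 {V : Type*} [Fintype V] (G H MB Ht : SimpleGraph V) (hHG : H ≤ G)
    (β : ℕ) (hβ : 1 ≤ β)
    (hP1 : ∀ u v, H.Adj u v → deg H u + deg H v ≤ β)
    (hP2 : ∀ u v, G.Adj u v → ¬ H.Adj u v → β - 1 ≤ deg H u + deg H v)
    (hMB : ∀ v, deg MB v ≤ 1)
    (hHt : ∀ u v, Ht.Adj u v ↔ H.Adj u v ∨ (MB.Adj u v ∧ deg H u + deg H v ≤ β)) :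
    (∀ u v, Ht.Adj u v → deg Ht u + deg Ht v ≤ β + 2) ∧
    (∀ u v, (G ⊔ MB).Adj u v → ¬ Ht.Adj u v → β - 1 ≤ deg Ht u + deg Ht v) := by
  have hlow : ∀ v, deg H v ≤ deg Ht v := by
    intro v
    apply Set.ncard_le_ncard _ (Set.toFinite _)
    intro w hw
    exact (hHt v w).mpr (Or.inl hw)
  have hhigh : ∀ v, deg Ht v ≤ deg H v + 1 := by
    intro v
    calc deg Ht v ≤ (H.neighborSet v ∪ MB.neighborSet v).ncard := by
          apply Set.ncard_le_ncard _ (Set.toFinite _)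
          intro w hw
          rcases (hHt v w).mp hw with h | ⟨h, _⟩
          · exact Or.inl h
          · exact Or.inr h
      _ ≤ (H.neighborSet v).ncard + (MB.neighborSet v).ncard :=
          Set.ncard_union_le _ _
      _ ≤ deg H v + 1 := by exact Nat.add_le_add_left (hMB v) _
  constructor
  · intro u v huv
    have hs : deg H u + deg H v ≤ β := by
      rcases (hHt u v).mp huv with h | ⟨_, h⟩
      · exact hP1 u v h
      · exact h
    calc deg Ht u + deg Ht v ≤ (deg H u + 1) + (deg H v + 1) :=
          Nat.add_le_add (hhigh u) (hhigh v)
      _ ≤ β + 2 := by omega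
  · intro u v huv hnot
    have hH : ¬ H.Adj u v := fun h => hnot ((hHt u v).mpr (Or.inl h))
    rcases huv with h | h
    · have := hP2 u v h hH
      have := hlow u
      have := hlow v
      omega
    · have : ¬ (deg H u + deg H v ≤ β) := fun hle => hnot ((hHt u v).mpr (Or.inr ⟨h, hle⟩))
      have := hlow u
      have := hlow v
      omega
end

section
/- Let H be an EDCS(G, β, β-1) and F a set of edges. Let B be the set of vertices v with deg_{H\F}(v) < deg_H(v) - εβ, and let G̃_F be G\F with every edge (u,v) ∉ H\F incident to B removed. Then H\F is an EDCS(G̃_F, β, (1-2ε)β - 1). -/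
open SimpleGraph

/-- Let `H` be an EDCS(`G`, `β`, `β-1`) and `F` a set of edges. Let `B` be the set of
vertices `v` with `deg_{H\F}(v) < deg_H(v) - εβ`, and let `G̃_F` be `G\F` with every edge
not in `H\F` that is incident to `B` removed. Then `H\F` is an
EDCS(`G̃_F`, `β`, `(1-2ε)β - 1`). -/
theorem stmt17 {V : Type*} [Fintype V] (G H : SimpleGraph V) (hHG : H ≤ G)
    (β : ℕ) (hβ : 1 ≤ β) (ε : ℝ) (hε0 : 0 < ε) (hε1 : ε < 1)
    (hP1 : ∀ u v, H.Adj u v → deg H u + deg H v ≤ β)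
    (hP2 : ∀ u v, G.Adj u v → ¬ H.Adj u v → β - 1 ≤ deg H u + deg H v)
    (F : Set (Sym2 V)) (hFG : F ⊆ G.edgeSet)
    (B : Set V) (hB : B = {v | (deg (H.deleteEdges F) v : ℝ) < (deg H v : ℝ) - ε * β})
    (GtF : SimpleGraph V)
    (hGtF : ∀ u v, GtF.Adj u v ↔
      (G.deleteEdges F).Adj u v ∧ ((H.deleteEdges F).Adj u v ∨ (u ∉ B ∧ v ∉ B))) :
    (∀ u v, (H.deleteEdges F).Adj u v →
        deg (H.deleteEdges F) u + deg (H.deleteEdges F) v ≤ β) ∧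
    (∀ u v, GtF.Adj u v → ¬ (H.deleteEdges F).Adj u v →
        (1 - 2 * ε) * β - 1 ≤ ((deg (H.deleteEdges F) u : ℝ) + deg (H.deleteEdges F) v)) := by
  have hmono : ∀ v, deg (H.deleteEdges F) v ≤ deg H v := by
    intro v
    apply Set.ncard_le_ncard _ (Set.toFinite _)
    intro w hw
    exact (SimpleGraph.deleteEdges_adj.mp hw).1
  constructor
  · intro u v huv
    have h := hP1 u v (SimpleGraph.deleteEdges_adj.mp huv).1
    have := hmono u
    have := hmono v
    omega
  · intro u v huv hnuv
    rw [hGtF] at huv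
    obtain ⟨hGF, h2⟩ := huv
    rcases h2 with h | ⟨hu, hv⟩
    · exact absurd h hnuv
    rw [SimpleGraph.deleteEdges_adj] at hGF
    obtain ⟨hG, hF⟩ := hGF
    have hnH : ¬ H.Adj u v := fun h =>
      hnuv (SimpleGraph.deleteEdges_adj.mpr ⟨h, hF⟩)
    have hsum := hP2 u v hG hnH
    have hsum' : (β : ℝ) - 1 ≤ (deg H u : ℝ) + deg H v := by
      have : ((β - 1 : ℕ) : ℝ) ≤ ((deg H u + deg H v : ℕ) : ℝ) := by
        exact_mod_cast hsum
      rw [Nat.cast_sub hβ] at this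
      push_cast at this ⊢
      linarith
    rw [hB] at hu hv
    simp only [Set.mem_setOf_eq, not_lt] at hu hv
    linarith
end

section
/- There is a graph G on n vertices (for infinitely many n), a subgraph H of G containing all edges of a maximum matching from each of two perfect-matching gadgets but missing all edges between two specified vertex classes, and an edge set F of size n/5, such that μ(G\F) = 2n/5 while μ(H\F) = n/5; i.e., the iterated-maximum-matching approach to fault tolerance can be a factor 2 worse than optimal. -/
open SimpleGraph

/-- The lower-bound graph `G`: vertex classes `X, Y, Y', Z, Z'` (indexed by `0,…,4` in
`Fin 5`), each of size `k`; complete bipartite between `X` and `Y` and between `X` and `Z`,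
a perfect matching between `Y` and `Y'`, and a perfect matching between `Z` and `Z'`. -/
def lbG (k : ℕ) : SimpleGraph (Fin 5 × Fin k) where
  Adj a b :=
    (a.1 = 0 ∧ b.1 = 1) ∨ (a.1 = 1 ∧ b.1 = 0) ∨
    (a.1 = 0 ∧ b.1 = 3) ∨ (a.1 = 3 ∧ b.1 = 0) ∨
    (a.1 = 1 ∧ b.1 = 2 ∧ a.2 = b.2) ∨ (a.1 = 2 ∧ b.1 = 1 ∧ a.2 = b.2) ∨
    (a.1 = 3 ∧ b.1 = 4 ∧ a.2 = b.2) ∨ (a.1 = 4 ∧ b.1 = 3 ∧ a.2 = b.2)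
  symm := by
    constructor
    intro a b h
    rcases h with ⟨h1, h2⟩ | ⟨h1, h2⟩ | ⟨h1, h2⟩ | ⟨h1, h2⟩ |
      ⟨h1, h2, h3⟩ | ⟨h1, h2, h3⟩ | ⟨h1, h2, h3⟩ | ⟨h1, h2, h3⟩ <;> simp_all
  loopless := by
    constructor
    intro a h
    rcases h with ⟨h1, h2⟩ | ⟨h1, h2⟩ | ⟨h1, h2⟩ | ⟨h1, h2⟩ |
      ⟨h1, h2, h3⟩ | ⟨h1, h2, h3⟩ | ⟨h1, h2, h3⟩ | ⟨h1, h2, h3⟩ <;> simp_all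

/-- The subgraph `H` chosen by the iterated-maximum-matching approach: the two perfect
matchings `Y–Y'` and `Z–Z'` and edges between `X` and `Y`, but no edges between `X` and `Z`. -/
def lbH (k : ℕ) : SimpleGraph (Fin 5 × Fin k) where
  Adj a b :=
    (a.1 = 0 ∧ b.1 = 1) ∨ (a.1 = 1 ∧ b.1 = 0) ∨
    (a.1 = 1 ∧ b.1 = 2 ∧ a.2 = b.2) ∨ (a.1 = 2 ∧ b.1 = 1 ∧ a.2 = b.2) ∨
    (a.1 = 3 ∧ b.1 = 4 ∧ a.2 = b.2) ∨ (a.1 = 4 ∧ b.1 = 3 ∧ a.2 = b.2)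
  symm := by
    constructor
    intro a b h
    rcases h with ⟨h1, h2⟩ | ⟨h1, h2⟩ |
      ⟨h1, h2, h3⟩ | ⟨h1, h2, h3⟩ | ⟨h1, h2, h3⟩ | ⟨h1, h2, h3⟩ <;> simp_all
  loopless := by
    constructor
    intro a h
    rcases h with ⟨h1, h2⟩ | ⟨h1, h2⟩ |
      ⟨h1, h2, h3⟩ | ⟨h1, h2, h3⟩ | ⟨h1, h2, h3⟩ | ⟨h1, h2, h3⟩ <;> simp_all

/-- The deleted edge set `F`: the perfect matching between `Z` and `Z'`. -/
def lbF (k : ℕ) : Set (Sym2 (Fin 5 × Fin k)) :=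
  {e | ∃ i : Fin k, e = s((3, i), (4, i))}

def MG (k : ℕ) : ((lbG k).deleteEdges (lbF k)).Subgraph where
  verts := {v | v.1 ≠ 4}
  Adj a b := a.2 = b.2 ∧ ((a.1 = 0 ∧ b.1 = 3) ∨ (a.1 = 3 ∧ b.1 = 0) ∨
    (a.1 = 1 ∧ b.1 = 2) ∨ (a.1 = 2 ∧ b.1 = 1))
  adj_sub := by
    rintro ⟨a1, a2⟩ ⟨b1, b2⟩ ⟨h2, h⟩
    rw [SimpleGraph.deleteEdges_adj]
    constructor
    · simp only [lbG]
      rcases h with ⟨ha, hb⟩ | ⟨ha, hb⟩ | ⟨ha, hb⟩ | ⟨ha, hb⟩ <;> subst ha hb h2 <;> tauto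
    · rintro ⟨i, hi⟩
      rw [Sym2.eq_iff] at hi
      rcases hi with ⟨hi1, hi2⟩ | ⟨hi1, hi2⟩ <;>
        simp_all [Prod.ext_iff]
  edge_vert := by
    rintro ⟨a1, a2⟩ ⟨b1, b2⟩ ⟨h2, h⟩
    rcases h with ⟨ha, hb⟩ | ⟨ha, hb⟩ | ⟨ha, hb⟩ | ⟨ha, hb⟩ <;> subst ha <;> simp
  symm := by
    constructor
    rintro a b ⟨h2, h⟩
    exact ⟨h2.symm, by tauto⟩

lemma MG_isMatching (k : ℕ) : (MG k).IsMatching := by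
  rintro ⟨c, i⟩ hv
  fin_cases c
  · exact ⟨(3, i), ⟨rfl, by tauto⟩, by rintro ⟨w1, w2⟩ ⟨h2, h⟩; simp_all [Prod.ext_iff, MG]⟩
  · exact ⟨(2, i), ⟨rfl, by tauto⟩, by rintro ⟨w1, w2⟩ ⟨h2, h⟩; simp_all [Prod.ext_iff, MG]⟩
  · exact ⟨(1, i), ⟨rfl, by tauto⟩, by rintro ⟨w1, w2⟩ ⟨h2, h⟩; simp_all [Prod.ext_iff, MG]⟩
  · exact ⟨(0, i), ⟨rfl, by tauto⟩, by rintro ⟨w1, w2⟩ ⟨h2, h⟩; simp_all [Prod.ext_iff, MG]⟩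
  · simp [MG] at hv

lemma MG_edgeSet (k : ℕ) : (MG k).edgeSet =
    Set.range (fun x : Fin k ⊕ Fin k => Sum.elim
      (fun i => s(((0 : Fin 5), i), ((3 : Fin 5), i)))
      (fun i => s(((1 : Fin 5), i), ((2 : Fin 5), i))) x) := by
  ext e
  induction' e with a b
  simp only [SimpleGraph.Subgraph.mem_edgeSet, Set.mem_range]
  constructor
  · rintro ⟨h2, h⟩
    obtain ⟨a1, a2⟩ := a; obtain ⟨b1, b2⟩ := b
    dsimp at h2 h; subst h2
    rcases h with ⟨ha, hb⟩ | ⟨ha, hb⟩ | ⟨ha, hb⟩ | ⟨ha, hb⟩ <;> subst ha hb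
    · exact ⟨Sum.inl a2, rfl⟩
    · exact ⟨Sum.inl a2, by simp [Sym2.eq_swap]⟩
    · exact ⟨Sum.inr a2, rfl⟩
    · exact ⟨Sum.inr a2, by simp [Sym2.eq_swap]⟩
  · rintro ⟨x, hx⟩
    rcases x with i | i <;> simp only [Sum.elim_inl, Sum.elim_inr, Sym2.eq_iff] at hx <;>
      rcases hx with ⟨ha, hb⟩ | ⟨ha, hb⟩ <;> subst ha hb <;>
      exact ⟨rfl, by tauto⟩

def MH (k : ℕ) : ((lbH k).deleteEdges (lbF k)).Subgraph where
  verts := {v | v.1 = 1 ∨ v.1 = 2}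
  Adj a b := a.2 = b.2 ∧ ((a.1 = 1 ∧ b.1 = 2) ∨ (a.1 = 2 ∧ b.1 = 1))
  adj_sub := by
    rintro ⟨a1, a2⟩ ⟨b1, b2⟩ ⟨h2, h⟩
    rw [SimpleGraph.deleteEdges_adj]
    constructor
    · simp only [lbH]
      rcases h with ⟨ha, hb⟩ | ⟨ha, hb⟩ <;> subst ha hb h2 <;> tauto
    · rintro ⟨i, hi⟩
      rw [Sym2.eq_iff] at hi
      rcases hi with ⟨hi1, hi2⟩ | ⟨hi1, hi2⟩ <;> simp_all [Prod.ext_iff]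
  edge_vert := by
    rintro ⟨a1, a2⟩ ⟨b1, b2⟩ ⟨h2, h⟩
    rcases h with ⟨ha, hb⟩ | ⟨ha, hb⟩ <;> subst ha <;> simp
  symm := by
    constructor
    rintro a b ⟨h2, h⟩
    exact ⟨h2.symm, by tauto⟩

lemma MH_isMatching (k : ℕ) : (MH k).IsMatching := by
  rintro ⟨c, i⟩ hv
  fin_cases c
  · simp [MH] at hv
  · exact ⟨(2, i), ⟨rfl, by tauto⟩, by rintro ⟨w1, w2⟩ ⟨h2, h⟩; simp_all [Prod.ext_iff, MH]⟩
  · exact ⟨(1, i), ⟨rfl, by tauto⟩, by rintro ⟨w1, w2⟩ ⟨h2, h⟩; simp_all [Prod.ext_iff, MH]⟩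
  · simp [MH] at hv
  · simp [MH] at hv

lemma MH_edgeSet (k : ℕ) : (MH k).edgeSet =
    Set.range (fun i : Fin k => s(((1 : Fin 5), i), ((2 : Fin 5), i))) := by
  ext e
  induction' e with a b
  simp only [SimpleGraph.Subgraph.mem_edgeSet, Set.mem_range]
  constructor
  · rintro ⟨h2, h⟩
    obtain ⟨a1, a2⟩ := a; obtain ⟨b1, b2⟩ := b
    dsimp at h2 h; subst h2
    rcases h with ⟨ha, hb⟩ | ⟨ha, hb⟩ <;> subst ha hb
    · exact ⟨a2, rfl⟩
    · exact ⟨a2, by simp [Sym2.eq_swap]⟩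
  · rintro ⟨i, hi⟩
    rw [Sym2.eq_iff] at hi
    rcases hi with ⟨ha, hb⟩ | ⟨ha, hb⟩ <;> subst ha hb <;> exact ⟨rfl, by tauto⟩

lemma matchAux_unique {V : Type*} {G : SimpleGraph V} {M : G.Subgraph}
    (hM : M.IsMatching) {v a b : V} (h1 : M.Adj v a) (h2 : M.Adj v b) : a = b := by
  obtain ⟨w, _, hw⟩ := hM (M.edge_vert h1)
  rw [hw a h1, hw b h2]

lemma matching_ncard_le {V : Type*} [Finite V] {G : SimpleGraph V} {M : G.Subgraph}
    (hM : M.IsMatching) (S : Set V)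
    (hS : ∀ a b, M.Adj a b → a ∈ S ∨ b ∈ S) :
    M.edgeSet.ncard ≤ S.ncard := by
  have key : ∀ e : M.edgeSet, ∃ v, v ∈ S ∧ ∃ w, M.Adj v w ∧ (e : Sym2 _) = s(v, w) := by
    rintro ⟨e, he⟩
    induction' e with a b
    rcases hS a b he with h | h
    · exact ⟨a, h, b, he, rfl⟩
    · exact ⟨b, h, a, he.symm, Sym2.eq_swap⟩
  choose f hfS w hw he using key
  have hinj : Function.Injective (fun e => (⟨f e, hfS e⟩ : S)) := by
    intro e1 e2 h
    simp only [Subtype.mk.injEq] at h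
    have : w e1 = w e2 := matchAux_unique hM (hw e1) (h ▸ hw e2)
    exact Subtype.ext (by rw [he e1, he e2, h, this])
  rw [← Nat.card_coe_set_eq, ← Nat.card_coe_set_eq]
  exact Nat.card_le_card_of_injective _ hinj

lemma range_ncard_eq {α : Type*} {V : Type*} [Fintype α] (f : α → V)
    (hf : Function.Injective f) : (Set.range f).ncard = Fintype.card α := by
  rw [← Nat.card_coe_set_eq, Nat.card_range_of_injective hf, Nat.card_eq_fintype_card]


lemma matchNum_eq {V : Type*} {G : SimpleGraph V} {m : ℕ}
    (M : G.Subgraph) (hM : M.IsMatching) (hcard : M.edgeSet.ncard = m)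
    (hub : ∀ N : G.Subgraph, N.IsMatching → N.edgeSet.ncard ≤ m) :
    matchNum G = m := by
  have hb : m ∈ upperBounds {n | ∃ M : G.Subgraph, M.IsMatching ∧ M.edgeSet.ncard = n} := by
    rintro n ⟨N, hN, rfl⟩; exact hub N hN
  exact le_antisymm (csSup_le ⟨m, M, hM, hcard⟩ hb) (le_csSup ⟨m, hb⟩ ⟨M, hM, hcard⟩)


lemma lbG_adj {k : ℕ} {a b : Fin 5 × Fin k} : (lbG k).Adj a b ↔
    ((a.1 = 0 ∧ b.1 = 1) ∨ (a.1 = 1 ∧ b.1 = 0) ∨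
    (a.1 = 0 ∧ b.1 = 3) ∨ (a.1 = 3 ∧ b.1 = 0) ∨
    (a.1 = 1 ∧ b.1 = 2 ∧ a.2 = b.2) ∨ (a.1 = 2 ∧ b.1 = 1 ∧ a.2 = b.2) ∨
    (a.1 = 3 ∧ b.1 = 4 ∧ a.2 = b.2) ∨ (a.1 = 4 ∧ b.1 = 3 ∧ a.2 = b.2)) := Iff.rfl

lemma lbH_adj {k : ℕ} {a b : Fin 5 × Fin k} : (lbH k).Adj a b ↔
    ((a.1 = 0 ∧ b.1 = 1) ∨ (a.1 = 1 ∧ b.1 = 0) ∨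
    (a.1 = 1 ∧ b.1 = 2 ∧ a.2 = b.2) ∨ (a.1 = 2 ∧ b.1 = 1 ∧ a.2 = b.2) ∨
    (a.1 = 3 ∧ b.1 = 4 ∧ a.2 = b.2) ∨ (a.1 = 4 ∧ b.1 = 3 ∧ a.2 = b.2)) := Iff.rfl

lemma lbHleG (k : ℕ) : lbH k ≤ lbG k := by
  intro a b h
  rw [lbH_adj] at h; rw [lbG_adj]; tauto

lemma lbFsub (k : ℕ) : lbF k ⊆ (lbG k).edgeSet := by
  rintro e ⟨i, rfl⟩
  rw [SimpleGraph.mem_edgeSet, lbG_adj]; tauto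

lemma lbFcard (k : ℕ) : (lbF k).ncard = k := by
  have : lbF k = Set.range (fun i : Fin k => s(((3 : Fin 5), i), ((4 : Fin 5), i))) := by
    ext e; simp [lbF, eq_comm]
  rw [this, range_ncard_eq]
  · simp
  · intro i j h
    simp only [Sym2.eq_iff, Prod.mk.injEq] at h
    tauto

lemma matchnumG (k : ℕ) : matchNum ((lbG k).deleteEdges (lbF k)) = 2 * k := by
  refine matchNum_eq (MG k) (MG_isMatching k) ?_ ?_
  · rw [MG_edgeSet, range_ncard_eq]
    · simp [two_mul]
    · rintro (i | i) (j | j) h <;>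
        simp only [Sum.elim_inl, Sum.elim_inr, Sym2.eq_iff, Prod.mk.injEq] at h <;>
        simp_all
  · intro N hN
    have hle := matching_ncard_le hN {v : Fin 5 × Fin k | v.1 = 0 ∨ v.1 = 1} ?_
    · refine hle.trans_eq ?_
      have : {v : Fin 5 × Fin k | v.1 = 0 ∨ v.1 = 1} =
          Set.range (fun x : Fin k ⊕ Fin k =>
            Sum.elim (fun i => (((0 : Fin 5), i) : Fin 5 × Fin k))
              (fun i => ((1 : Fin 5), i)) x) := by
        ext ⟨c, i⟩
        constructor
        · rintro (h | h)
          · exact ⟨Sum.inl i, by simp [Prod.ext_iff, h.symm]⟩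
          · exact ⟨Sum.inr i, by simp [Prod.ext_iff, h.symm]⟩
        · rintro ⟨(j | j), hj⟩ <;> simp_all [Prod.ext_iff] <;> tauto
      rw [this, range_ncard_eq]
      · simp [two_mul]
      · rintro (i | i) (j | j) h <;> simp_all [Prod.ext_iff]
    · intro a b hab
      obtain ⟨hadj, hne⟩ := SimpleGraph.deleteEdges_adj.mp (N.adj_sub hab)
      rw [lbG_adj] at hadj
      obtain ⟨a1, a2⟩ := a; obtain ⟨b1, b2⟩ := b
      rcases hadj with ⟨h1, h2⟩ | ⟨h1, h2⟩ | ⟨h1, h2⟩ | ⟨h1, h2⟩ |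
        ⟨h1, h2, h3⟩ | ⟨h1, h2, h3⟩ | ⟨h1, h2, h3⟩ | ⟨h1, h2, h3⟩ <;>
        simp_all
      · exact absurd ⟨a2, by simp_all [Prod.ext_iff]⟩ hne
      · exact absurd ⟨b2, by simp_all [Sym2.eq_iff, Prod.ext_iff]⟩ hne

lemma matchnumH (k : ℕ) : matchNum ((lbH k).deleteEdges (lbF k)) = k := by
  refine matchNum_eq (MH k) (MH_isMatching k) ?_ ?_
  · rw [MH_edgeSet, range_ncard_eq]
    · simp
    · intro i j h
      simp only [Sym2.eq_iff, Prod.mk.injEq] at h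
      tauto
  · intro N hN
    have hle := matching_ncard_le hN {v : Fin 5 × Fin k | v.1 = 1} ?_
    · refine hle.trans_eq ?_
      have : {v : Fin 5 × Fin k | v.1 = 1} =
          Set.range (fun i : Fin k => (((1 : Fin 5), i) : Fin 5 × Fin k)) := by
        ext ⟨c, i⟩
        constructor
        · rintro h
          exact ⟨i, by simp_all [Prod.ext_iff]⟩
        · rintro ⟨j, hj⟩; simp_all [Prod.ext_iff]
      rw [this, range_ncard_eq]
      · simp
      · intro i j h; simp_all [Prod.ext_iff]
    · intro a b hab
      obtain ⟨hadj, hne⟩ := SimpleGraph.deleteEdges_adj.mp (N.adj_sub hab)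
      rw [lbH_adj] at hadj
      obtain ⟨a1, a2⟩ := a; obtain ⟨b1, b2⟩ := b
      rcases hadj with ⟨h1, h2⟩ | ⟨h1, h2⟩ |
        ⟨h1, h2, h3⟩ | ⟨h1, h2, h3⟩ | ⟨h1, h2, h3⟩ | ⟨h1, h2, h3⟩ <;>
        simp_all
      · exact absurd ⟨a2, by simp_all [Prod.ext_iff]⟩ hne
      · exact absurd ⟨b2, by simp_all [Sym2.eq_iff, Prod.ext_iff]⟩ hne

/-- For every `n = 5k` (so for infinitely many `n`), the graph `G` on `n` vertices, the
subgraph `H` (containing the two perfect matchings and the `X–Y` edges but no `X–Z` edges),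
and the fault set `F` of size `n/5` satisfy `μ(G\F) = 2n/5` while `μ(H\F) = n/5`: the
iterated-maximum-matching approach to fault tolerance can be a factor `2` worse than optimal. -/
theorem stmt18 (k : ℕ) (hk : 0 < k) :
    Fintype.card (Fin 5 × Fin k) = 5 * k ∧
    lbH k ≤ lbG k ∧
    lbF k ⊆ (lbG k).edgeSet ∧
    (lbF k).ncard = 5 * k / 5 ∧
    matchNum ((lbG k).deleteEdges (lbF k)) = 2 * (5 * k) / 5 ∧
    matchNum ((lbH k).deleteEdges (lbF k)) = 5 * k / 5 := by
  have h5 : 5 * k / 5 = k := by omega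
  have h25 : 2 * (5 * k) / 5 = 2 * k := by omega
  exact ⟨by simp, lbHleG k, lbFsub k, by rw [h5, lbFcard],
    by rw [h25, matchnumG], by rw [h5, matchnumH]⟩
end
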